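/- arXiv:2508.08045 — 8 statements merged into one kernel-verified Lean document; each statement's English description precedes it below -/
import Mathlib

section
/- For all α, β ∈ [0,1], the (α,β)-Quantile mechanism is strategyproof: for every instance, every agent i with true location x_i, and every misreport x_i′ ∈ ℝ, the max-variant cost of agent i under the mechanism's output when she reports x_i is at most her max-variant cost under the mechanism's output when she reports x_i′ (the other agents' reports being fixed). -/
/-!
Misreporting only moves the quantile point of the agent's own group, and the truthful quantile
point `p` always lies between the agent's location `x` and the misreported one `p'`. Say
`x ≤ p ≤ p'`, and let `c` be the agent's cost after misreporting, so both facilities of the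
misreport lie in `[x - c, x + c]`. Moving `p` to the right moves the group's first representative
to the right, while a candidate inside `[x - c, x + c]` keeps both truthful representatives of
the group from lying left of `x - c`; the counting description of order statistics,
`orderStat S j ≤ H ↔ j < #{s ∈ S | s ≤ H}`, transports these bounds to both truthful facilities.
The case `p' ≤ p ≤ x` is the mirror image under `x ↦ -x`. Reflection changes the tie-breaking of
`closest` and turns the `j`-th smallest representative into the `(k - 1 - j)`-th, so the second
stage is handled for an arbitrary nearest-point selector and an arbitrary index.
-/

noncomputable section

/-- Max-variant individual cost of an agent at `x` under facility profile `w`. -/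
def fcost (x : ℝ) (w : ℝ × ℝ) : ℝ := max |x - w.1| |x - w.2|

/-- `w` is a facility location profile for the candidate multiset `A`:
its first slot is an element of `A` and its second slot is an element of `A`
with one copy of the first slot removed. -/
def IsProfile (A : Multiset ℝ) (w : ℝ × ℝ) : Prop :=
  w.1 ∈ A ∧ w.2 ∈ A.erase w.1

/-- Canonical closest element of the multiset `A` to `p` (ties broken to the smaller). -/
def closest (A : Multiset ℝ) (p : ℝ) : ℝ :=
  if h : A.toFinset.Nonempty then
    (A.toFinset.filter fun a => ∀ b ∈ A.toFinset, |p - a| ≤ |p - b|).min'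
      (by
        obtain ⟨a, ha, hmin⟩ := A.toFinset.exists_min_image (fun a => |p - a|) h
        exact ⟨a, Finset.mem_filter.mpr ⟨ha, hmin⟩⟩)
  else 0

/-- The `⌈γ · |S|⌉`-th leftmost element of the multiset `S` (the leftmost when `γ = 0`). -/
def qSel (S : Multiset ℝ) (γ : ℝ) : ℝ :=
  (S.sort (· ≤ ·)).getD (⌈γ * (Multiset.card S : ℝ)⌉.toNat - 1) 0

/-- Multiset of locations of the agents of group `d`. -/
def groupLocs {n k : ℕ} (group : Fin n → Fin k) (x : Fin n → ℝ) (d : Fin k) : Multiset ℝ :=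
  ((Finset.univ.filter fun i => group i = d).val).map x

/-- The (α,β)-Quantile mechanism: for each group `d` the representatives are the two
candidate locations closest to the ⌈α·n_d⌉-th leftmost agent of the group, and the two
facilities are chosen among the representatives by the ⌈β·k⌉-th leftmost rule. -/
def quantileMech (A : Multiset ℝ) (α β : ℝ) {n k : ℕ}
    (group : Fin n → Fin k) (x : Fin n → ℝ) : ℝ × ℝ :=
  let y1 : Fin k → ℝ := fun d => closest A (qSel (groupLocs group x d) α)
  let y2 : Fin k → ℝ := fun d => closest (A.erase (y1 d)) (qSel (groupLocs group x d) α)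
  let w1 : ℝ := qSel (Finset.univ.val.map y1) β
  let w2 : ℝ := qSel (Finset.univ.val.map fun d => if y1 d = w1 then y2 d else y1 d) β
  (w1, w2)

open Finset Set

namespace QuantileMech

theorem pred_getElem_iff_lt_countP {α : Type*} {r : α → α → Prop} {p : α → Prop}
    [DecidablePred p] (hp : ∀ a b, r a b → p b → p a) {l : List α} (hl : l.Pairwise r)
    {j : ℕ} (hj : j < l.length) : p l[j] ↔ j < l.countP p := by
  induction l generalizing j with
  | nil => simp at hj
  | cons a l ih =>
    obtain ⟨ha, hl⟩ := List.pairwise_cons.mp hl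
    by_cases hpa : p a
    · cases j with
      | zero => simp [hpa]
      | succ j => simpa [List.countP_cons, hpa] using ih hl (by simpa using hj)
    · have hnone : ∀ b ∈ a :: l, ¬ p b := by
        simpa [hpa] using fun b hb hpb => hpa (hp a b (ha b hb) hpb)
      have hzero : (a :: l).countP p = 0 :=
        List.countP_eq_zero.mpr fun b hb => by simpa using hnone b hb
      simp [hzero, hnone _ (List.getElem_mem hj)]

/-- The `j`-th smallest element of `S`, counting from `0` (junk value `0` when `card S ≤ j`). -/
def orderStat (S : Multiset ℝ) (j : ℕ) : ℝ :=
  (S.sort (· ≤ ·)).getD j 0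

section OrderStat

variable {S : Multiset ℝ} {j : ℕ}

theorem pred_orderStat_iff {p : ℝ → Prop} [DecidablePred p] (hp : ∀ a b, a ≤ b → p b → p a)
    (hj : j < Multiset.card S) : p (orderStat S j) ↔ j < S.countP p := by
  have hj' : j < (S.sort (· ≤ ·)).length := by simpa using hj
  rw [orderStat, List.getD_eq_getElem _ _ hj', pred_getElem_iff_lt_countP hp (S.pairwise_sort _),
    ← Multiset.sort_eq S (· ≤ ·), Multiset.coe_countP]
  simp

theorem orderStat_le_iff {H : ℝ} (hj : j < Multiset.card S) :
    orderStat S j ≤ H ↔ j < S.countP (· ≤ H) :=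
  pred_orderStat_iff (fun _ _ hab hb => hab.trans hb) hj

theorem le_orderStat_iff {L : ℝ} (hj : j < Multiset.card S) :
    L ≤ orderStat S j ↔ S.countP (· < L) ≤ j := by
  rw [← not_lt, pred_orderStat_iff (p := (· < L)) (fun _ _ hab hb => hab.trans_lt hb) hj, not_lt]

theorem orderStat_mem (hj : j < Multiset.card S) : orderStat S j ∈ S := by
  have hj' : j < (S.sort (· ≤ ·)).length := by simpa using hj
  rw [orderStat, List.getD_eq_getElem _ _ hj', ← Multiset.mem_sort (· ≤ ·)]
  exact List.getElem_mem hj'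

theorem orderStat_map_neg (hj : j < Multiset.card S) :
    orderStat (S.map Neg.neg) (Multiset.card S - 1 - j) = -orderStat S j := by
  have hcard : Multiset.card (S.map Neg.neg) = Multiset.card S := Multiset.card_map _ _
  have hj' : Multiset.card S - 1 - j < Multiset.card (S.map Neg.neg) := by omega
  set s := orderStat S j
  have hlt := (le_orderStat_iff (L := s) hj).mp le_rfl
  have hle := (orderStat_le_iff (H := s) hj).mp le_rfl
  have hsplit_lt := Multiset.card_eq_countP_add_countP (· < s) S
  have hsplit_le := Multiset.card_eq_countP_add_countP (· ≤ s) S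
  apply le_antisymm
  · rw [orderStat_le_iff hj', Multiset.countP_map, ← Multiset.countP_eq_card_filter]
    simp only [neg_le_neg_iff, not_lt] at hsplit_lt ⊢
    omega
  · rw [le_orderStat_iff hj', Multiset.countP_map, ← Multiset.countP_eq_card_filter]
    simp only [neg_lt_neg_iff, not_le] at hsplit_le ⊢
    omega

variable {ι : Type*} {I : Multiset ι} {y y' : ι → ℝ}

theorem countP_map_le_countP_map {p p' : ℝ → Prop} [DecidablePred p] [DecidablePred p']
    (h : ∀ e ∈ I, p' (y' e) → p (y e)) : (I.map y').countP p' ≤ (I.map y).countP p := by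
  induction I using Quotient.inductionOn
  simp only [Multiset.quot_mk_to_coe, Multiset.map_coe, Multiset.coe_countP, List.countP_map]
  exact List.countP_mono_left (by simpa using h)

theorem orderStat_map_le {H H' : ℝ} (hj : j < Multiset.card I) (h : ∀ e ∈ I, y' e ≤ H' → y e ≤ H)
    (h' : orderStat (I.map y') j ≤ H') : orderStat (I.map y) j ≤ H := by
  rw [orderStat_le_iff (by simpa using hj)] at h' ⊢
  exact h'.trans_le (countP_map_le_countP_map h)

theorem le_orderStat_map {L L' : ℝ} (hj : j < Multiset.card I) (h : ∀ e ∈ I, y e < L → y' e < L')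
    (h' : L' ≤ orderStat (I.map y') j) : L ≤ orderStat (I.map y) j := by
  rw [le_orderStat_iff (by simpa using hj)] at h' ⊢
  exact (countP_map_le_countP_map h).trans h'

theorem orderStat_map_mono (hj : j < Multiset.card I) (h : ∀ e ∈ I, y e ≤ y' e) :
    orderStat (I.map y) j ≤ orderStat (I.map y') j :=
  orderStat_map_le hj (fun e he hle => (h e he).trans hle) le_rfl

theorem orderStat_map_mem_uIcc {i : ι} (hj : j < Multiset.card I)
    (h : ∀ e ∈ I, e ≠ i → y e = y' e) :
    orderStat (I.map y) j ∈ uIcc (y i) (orderStat (I.map y') j) := by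
  set s' := orderStat (I.map y') j
  constructor
  · refine le_orderStat_map (L' := y i ⊓ s') hj (fun e he hlt => ?_) inf_le_right
    by_cases hei : e = i
    · subst hei; exact absurd hlt (not_lt.mpr inf_le_left)
    · exact h e he hei ▸ hlt
  · refine orderStat_map_le (H' := y i ⊔ s') hj (fun e he hle => ?_) le_sup_right
    by_cases hei : e = i
    · subst hei; exact le_sup_left
    · exact h e he hei ▸ hle

end OrderStat

def IsNearestSelector (t : Multiset ℝ → ℝ → ℝ) : Prop :=
  ∀ B : Multiset ℝ, B ≠ 0 → ∀ p, t B p ∈ B ∧ ∀ b ∈ B, |p - t B p| ≤ |p - b|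

theorem isNearestSelector_closest : IsNearestSelector closest := by
  intro B hB p
  have hne : B.toFinset.Nonempty := Multiset.toFinset_nonempty.mpr hB
  rw [closest, dif_pos hne]
  obtain ⟨hmem, hmin⟩ := Finset.mem_filter.mp (Finset.min'_mem
    (B.toFinset.filter fun a => ∀ b ∈ B.toFinset, |p - a| ≤ |p - b|) _)
  exact ⟨Multiset.mem_toFinset.mp hmem, fun b hb => hmin b (Multiset.mem_toFinset.mpr hb)⟩

theorem two_mul_le_add_of_abs_sub_le {a b p : ℝ} (hab : a < b) (h : |p - a| ≤ |p - b|) :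
    2 * p ≤ a + b := by
  rcases abs_cases (p - a) with ⟨h1, _⟩ | ⟨h1, _⟩ <;>
    rcases abs_cases (p - b) with ⟨h2, _⟩ | ⟨h2, _⟩ <;> linarith

theorem add_le_two_mul_of_abs_sub_le {a b p : ℝ} (hab : a < b) (h : |p - b| ≤ |p - a|) :
    a + b ≤ 2 * p := by
  rcases abs_cases (p - a) with ⟨h1, _⟩ | ⟨h1, _⟩ <;>
    rcases abs_cases (p - b) with ⟨h2, _⟩ | ⟨h2, _⟩ <;> linarith

namespace IsNearestSelector

variable {t : Multiset ℝ → ℝ → ℝ} {B : Multiset ℝ}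

theorem neg (ht : IsNearestSelector t) : IsNearestSelector fun B p => -t (B.map Neg.neg) (-p) := by
  intro B hB p
  obtain ⟨hmem, hmin⟩ := ht (B.map Neg.neg) (by simpa using hB) (-p)
  refine ⟨by simpa using Multiset.mem_map_of_mem Neg.neg hmem, fun b hb => ?_⟩
  calc |p - -t (B.map Neg.neg) (-p)| = |-p - t (B.map Neg.neg) (-p)| := by
        rw [sub_neg_eq_add, ← abs_neg, neg_add']
    _ ≤ |-p - -b| := hmin (-b) (Multiset.mem_map_of_mem _ hb)
    _ = |p - b| := by rw [neg_sub_neg, abs_sub_comm]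

theorem mono (ht : IsNearestSelector t) (hB : B ≠ 0) {p p' : ℝ} (h : p ≤ p') : t B p ≤ t B p' := by
  by_contra! hlt
  rcases h.eq_or_lt with rfl | h
  · exact lt_irrefl _ hlt
  have h1 := add_le_two_mul_of_abs_sub_le hlt ((ht B hB p).2 _ (ht B hB p').1)
  have h2 := two_mul_le_add_of_abs_sub_le hlt ((ht B hB p').2 _ (ht B hB p).1)
  linarith

theorem sub_le (ht : IsNearestSelector t) {b x c p : ℝ} (hb : b ∈ B) (hxb : |x - b| ≤ c)
    (hxp : x ≤ p) : x - c ≤ t B p := by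
  have hB : B ≠ 0 := by rintro rfl; simp at hb
  have hnear : |p - t B p| ≤ |p - x| + |x - b| :=
    ((ht B hB p).2 b hb).trans (abs_sub_le p x b)
  rw [abs_of_nonneg (sub_nonneg.mpr hxp)] at hnear
  linarith [le_abs_self (p - t B p)]

end IsNearestSelector

/-- The representatives `(y_{d(1)}, y_{d(2)})` of a group whose quantile agent sits at `p`. -/
def rep (t : Multiset ℝ → ℝ → ℝ) (A : Multiset ℝ) (p : ℝ) : ℝ × ℝ :=
  (t A p, t (A.erase (t A p)) p)

section Rep

variable {t : Multiset ℝ → ℝ → ℝ} {A : Multiset ℝ} {p p' : ℝ}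

theorem isProfile_rep (ht : IsNearestSelector t) (hA : 2 ≤ Multiset.card A) (p : ℝ) :
    IsProfile A (rep t A p) := by
  have hA0 : A ≠ 0 := by rintro rfl; simp at hA
  have hmem := (ht A hA0 p).1
  have hE : A.erase (t A p) ≠ 0 := by
    rw [← Multiset.card_pos, Multiset.card_erase_of_mem hmem, Nat.pred_eq_sub_one]; omega
  exact ⟨hmem, (ht _ hE p).1⟩

theorem rep_snd_le (ht : IsNearestSelector t) {b : ℝ} (hb : b ∈ A) (h : (rep t A p).1 < b) :
    (rep t A p).2 ≤ b := by
  have hA : A ≠ 0 := by rintro rfl; simp at hb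
  have hb' : b ∈ A.erase (t A p) := (Multiset.mem_erase_of_ne h.ne').mpr hb
  have hE : A.erase (t A p) ≠ 0 := by rintro h0; simp [h0] at hb'
  by_contra! hbv
  have h1 := two_mul_le_add_of_abs_sub_le (h.trans hbv)
    ((ht A hA p).2 _ (Multiset.mem_of_mem_erase (ht _ hE p).1))
  have h2 := add_le_two_mul_of_abs_sub_le hbv ((ht _ hE p).2 b hb')
  simp only [rep] at h h1 h2
  linarith

theorem sub_fcost_le_rep (ht : IsNearestSelector t) {w : ℝ × ℝ} (hw : IsProfile A w) {x : ℝ}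
    (hxp : x ≤ p) : x - fcost x w ≤ (rep t A p).1 ∧ x - fcost x w ≤ (rep t A p).2 := by
  have hc₁ : |x - w.1| ≤ fcost x w := le_max_left _ _
  have hc₂ : |x - w.2| ≤ fcost x w := le_max_right _ _
  refine ⟨ht.sub_le hw.1 hc₁ hxp, ?_⟩
  by_cases h : t A p = w.1
  · exact ht.sub_le (B := A.erase (t A p)) (h ▸ hw.2) hc₂ hxp
  · exact ht.sub_le ((Multiset.mem_erase_of_ne (Ne.symm h)).mpr hw.1) hc₁ hxp

theorem rep_neg :
    rep (fun B p => -t (B.map Neg.neg) (-p)) (A.map Neg.neg) (-p) = -rep t A p := by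
  have hA : (A.map Neg.neg).map Neg.neg = A := by simp [Multiset.map_map]
  simp [rep, hA, ← Multiset.map_erase _ neg_injective, Multiset.map_map]

end Rep

/-- The value `z_d` of a group in the second round, once the first facility `w₁` is placed. -/
def nextRep (w₁ : ℝ) (r : ℝ × ℝ) : ℝ :=
  if r.1 = w₁ then r.2 else r.1

theorem nextRep_rep_le_max {t : Multiset ℝ → ℝ → ℝ} {A : Multiset ℝ} {p p' : ℝ}
    (ht : IsNearestSelector t) (hA : 2 ≤ Multiset.card A) (h : p ≤ p') (w₁ : ℝ) :
    nextRep w₁ (rep t A p) ≤ max (nextRep w₁ (rep t A p')) w₁ := by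
  have hA0 : A ≠ 0 := by rintro rfl; simp at hA
  have hmono : (rep t A p).1 ≤ (rep t A p').1 := ht.mono hA0 h
  unfold nextRep
  split_ifs with h₁ h₂ h₂
  · have hE := (isProfile_rep ht hA p).2
    simp only [rep] at h₁ h₂ hE ⊢
    rw [h₁] at hE
    rw [h₁, h₂]
    exact le_max_of_le_left (ht.mono (by rintro h0; simp [h0] at hE) h)
  · exact le_max_of_le_left
      (rep_snd_le ht (isProfile_rep ht hA p').1 (hmono.lt_of_ne fun h' => h₂ (h' ▸ h₁)))
  · exact le_max_of_le_right (h₂ ▸ hmono)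
  · exact le_max_of_le_left hmono

section ChooseFacilities

variable {ι : Type*} [Fintype ι] {j : ℕ}

/-- Step 2 of the mechanism, applied to the representative pairs `r` of the groups. -/
def chooseFacilities (j : ℕ) (r : ι → ℝ × ℝ) : ℝ × ℝ :=
  let w₁ := orderStat (univ.val.map fun e => (r e).1) j
  (w₁, orderStat (univ.val.map fun e => nextRep w₁ (r e)) j)

theorem isProfile_chooseFacilities {A : Multiset ℝ} {r : ι → ℝ × ℝ}
    (hj : j < Fintype.card ι) (hr : ∀ e, IsProfile A (r e)) :
    IsProfile A (chooseFacilities j r) := by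
  obtain ⟨e₁, -, he₁⟩ := Multiset.mem_map.mp (orderStat_mem (by simpa using hj) :
    orderStat (univ.val.map fun e => (r e).1) j ∈ _)
  set w₁ := orderStat (univ.val.map fun e => (r e).1) j
  obtain ⟨e₂, -, he₂⟩ := Multiset.mem_map.mp (orderStat_mem (by simpa using hj) :
    orderStat (univ.val.map fun e => nextRep w₁ (r e)) j ∈ _)
  refine ⟨(he₁ ▸ (hr e₁).1 : w₁ ∈ A), ?_⟩
  show orderStat (univ.val.map fun e => nextRep w₁ (r e)) j ∈ A.erase w₁
  rw [← he₂]
  unfold nextRep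
  split_ifs with h
  · exact h ▸ (hr e₂).2
  · exact (Multiset.mem_erase_of_ne h).mpr (hr e₂).1

theorem chooseFacilities_neg (hj : j < Fintype.card ι) (r : ι → ℝ × ℝ) :
    chooseFacilities (Fintype.card ι - 1 - j) (-r) = -chooseFacilities j r := by
  have hneg : ∀ y : ι → ℝ, orderStat (univ.val.map fun e => -y e) (Fintype.card ι - 1 - j) =
      -orderStat (univ.val.map y) j := fun y => by
    simpa [Multiset.map_map] using orderStat_map_neg (S := univ.val.map y) (by simpa using hj)
  have hnext : ∀ w₁ (r : ℝ × ℝ), nextRep (-w₁) (-r) = -nextRep w₁ r := fun w₁ r => by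
    simp only [nextRep, Prod.fst_neg, Prod.snd_neg, neg_inj]
    split_ifs <;> rfl
  simp only [chooseFacilities, Pi.neg_apply, Prod.fst_neg, hneg, hnext, Prod.neg_mk]

theorem chooseFacilities_rep_snd_le {t : Multiset ℝ → ℝ → ℝ} {A : Multiset ℝ}
    (ht : IsNearestSelector t) (hj : j < Fintype.card ι) (q : ι → ℝ) {b : ℝ} (hb : b ∈ A)
    (h : (chooseFacilities j (rep t A ∘ q)).1 < b) : (chooseFacilities j (rep t A ∘ q)).2 ≤ b := by
  refine orderStat_map_le (y' := fun e => (rep t A (q e)).1) (by simpa using hj)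
    (fun e _ hle => ?_) le_rfl
  unfold nextRep
  split_ifs with heq
  · exact rep_snd_le ht hb (heq ▸ h)
  · exact hle.trans h.le

theorem le_chooseFacilities_snd_of_fst_lt {r r' : ι → ℝ × ℝ} {d : ι} {L : ℝ}
    (hj : j < Fintype.card ι) (hr : ∀ e ≠ d, (r e).1 = (r' e).1)
    (hlt : (chooseFacilities j r).1 < (chooseFacilities j r').1)
    (hLd : L ≤ nextRep (chooseFacilities j r).1 (r d)) (hL : L ≤ (chooseFacilities j r').1) :
    L ≤ (chooseFacilities j r).2 := by
  refine le_orderStat_map (y' := fun e => (r' e).1) (by simpa using hj) (fun e _ hz => ?_) le_rfl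
  by_cases hed : e = d
  · subst hed; exact absurd hz (not_lt.mpr hLd)
  rw [← hr e hed]
  unfold nextRep at hz
  split_ifs at hz with h₁
  · exact h₁ ▸ hlt
  · exact hz.trans_le hL

end ChooseFacilities

theorem fcost_neg (x : ℝ) (w : ℝ × ℝ) : fcost (-x) (-w) = fcost x w := by
  simp only [fcost, Prod.fst_neg, Prod.snd_neg, neg_sub_neg, abs_sub_comm]

section Strategyproof

variable {ι : Type*} [Fintype ι] {j : ℕ} {t : Multiset ℝ → ℝ → ℝ} {A : Multiset ℝ}

theorem chooseFacilities_rep_snd_le_max_of_fst_eq (ht : IsNearestSelector t)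
    (hA : 2 ≤ Multiset.card A) (hj : j < Fintype.card ι) {q q' : ι → ℝ} {d : ι}
    (hq : ∀ e ≠ d, q e = q' e) (hqq : q d ≤ q' d)
    (heq : (chooseFacilities j (rep t A ∘ q)).1 = (chooseFacilities j (rep t A ∘ q')).1) :
    (chooseFacilities j (rep t A ∘ q)).2 ≤
      max (chooseFacilities j (rep t A ∘ q')).2 (chooseFacilities j (rep t A ∘ q')).1 := by
  set w' := chooseFacilities j (rep t A ∘ q')
  refine orderStat_map_le (H' := w'.2) (by simpa using hj)
    (fun e _ (hle : nextRep w'.1 (rep t A (q' e)) ≤ w'.2) => ?_) le_rfl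
  have hz : nextRep w'.1 (rep t A (q e)) ≤ max (nextRep w'.1 (rep t A (q' e))) w'.1 := by
    by_cases hed : e = d
    · subst hed; exact nextRep_rep_le_max ht hA hqq w'.1
    · exact hq e hed ▸ le_max_left _ _
  exact heq ▸ hz.trans (max_le_max_right _ hle)

theorem fcost_chooseFacilities_le_of_le (ht : IsNearestSelector t) (hA : 2 ≤ Multiset.card A)
    (hj : j < Fintype.card ι) {q q' : ι → ℝ} {d : ι} {x : ℝ} (hq : ∀ e ≠ d, q e = q' e)
    (hxq : x ≤ q d) (hqq : q d ≤ q' d) :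
    fcost x (chooseFacilities j (rep t A ∘ q)) ≤ fcost x (chooseFacilities j (rep t A ∘ q')) := by
  have hA0 : A ≠ 0 := by rintro rfl; simp at hA
  have hj' : j < Multiset.card (univ.val : Multiset ι) := by simpa using hj
  set w := chooseFacilities j (rep t A ∘ q)
  set w' := chooseFacilities j (rep t A ∘ q')
  set c := fcost x w'
  have hw' : IsProfile A w' := isProfile_chooseFacilities hj fun e => isProfile_rep ht hA _
  have hc₁ := abs_le.mp (show |x - w'.1| ≤ c from le_max_left _ _)
  have hc₂ := abs_le.mp (show |x - w'.2| ≤ c from le_max_right _ _)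
  have hagree : ∀ e ≠ d, rep t A (q e) = rep t A (q' e) := fun e he => by rw [hq e he]
  have hw₁ : w.1 ≤ w'.1 := orderStat_map_mono hj' fun e _ => by
    by_cases hed : e = d
    · subst hed; exact ht.mono hA0 hqq
    · exact (congrArg Prod.fst (hagree e hed)).le
  obtain ⟨hd₁, hd₂⟩ : x - c ≤ _ ∧ x - c ≤ _ := sub_fcost_le_rep ht hw' (p := q d) hxq
  have hzd : x - c ≤ nextRep w.1 (rep t A (q d)) := by unfold nextRep; split_ifs <;> assumption
  have hlo₁ : x - c ≤ w.1 :=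
    (le_min hd₁ (show x - c ≤ w'.1 by linarith)).trans (orderStat_map_mem_uIcc (i := d) hj'
      fun e _ he => congrArg Prod.fst (hagree e he)).1
  have hlo₂ : x - c ≤ w.2 := by
    rcases hw₁.eq_or_lt with heq | hlt
    · exact (le_min hzd (show x - c ≤ w'.2 by linarith)).trans (orderStat_map_mem_uIcc (i := d)
        (y := fun e => nextRep w.1 (rep t A (q e))) (y' := fun e => nextRep w'.1 (rep t A (q' e)))
        hj' fun e _ he => by rw [heq, hagree e he]).1
    · exact le_chooseFacilities_snd_of_fst_lt (r := rep t A ∘ q) (r' := rep t A ∘ q') hj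
        (fun e he => congrArg Prod.fst (hagree e he)) hlt hzd (by linarith)
  have hhi₂ : w.2 ≤ x + c := by
    rcases hw₁.eq_or_lt with heq | hlt
    · exact (chooseFacilities_rep_snd_le_max_of_fst_eq ht hA hj hq hqq heq).trans
        (max_le (by linarith) (by linarith))
    · exact (chooseFacilities_rep_snd_le ht hj q hw'.1 hlt).trans (by linarith)
  exact max_le (abs_le.mpr ⟨by linarith, by linarith⟩) (abs_le.mpr ⟨by linarith, by linarith⟩)

theorem fcost_chooseFacilities_le (ht : IsNearestSelector t) (hA : 2 ≤ Multiset.card A)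
    (hj : j < Fintype.card ι) {q q' : ι → ℝ} {d : ι} {x : ℝ} (hq : ∀ e ≠ d, q e = q' e)
    (hqd : q d ∈ uIcc x (q' d)) :
    fcost x (chooseFacilities j (rep t A ∘ q)) ≤ fcost x (chooseFacilities j (rep t A ∘ q')) := by
  rcases le_total x (q' d) with h | h
  · rw [uIcc_of_le h] at hqd
    exact fcost_chooseFacilities_le_of_le ht hA hj hq hqd.1 hqd.2
  · rw [uIcc_of_ge h] at hqd
    have hrep : ∀ q : ι → ℝ, rep (fun B p => -t (B.map Neg.neg) (-p)) (A.map Neg.neg) ∘ (-q) =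
        -(rep t A ∘ q) := fun q => funext fun e => rep_neg
    have key := fcost_chooseFacilities_le_of_le ht.neg (A := A.map Neg.neg) (by simpa using hA)
      (Nat.sub_one_sub_lt_of_lt hj) (q := -q) (q' := -q') (x := -x)
      (fun e he => by simp [hq e he]) (neg_le_neg hqd.2) (neg_le_neg hqd.1)
    rwa [hrep, hrep, chooseFacilities_neg hj, chooseFacilities_neg hj, fcost_neg, fcost_neg] at key

end Strategyproof

theorem qSel_eq_orderStat (S : Multiset ℝ) (γ : ℝ) :
    qSel S γ = orderStat S (⌈γ * Multiset.card S⌉.toNat - 1) :=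
  rfl

theorem quantileMech_eq {α β : ℝ} {n k : ℕ} (A : Multiset ℝ) (group : Fin n → Fin k)
    (x : Fin n → ℝ) :
    quantileMech A α β group x = chooseFacilities (⌈β * k⌉.toNat - 1)
      (rep closest A ∘ fun d => qSel (groupLocs group x d) α) := by
  simp [quantileMech, chooseFacilities, rep, nextRep, qSel, orderStat]

theorem ceil_mul_toNat_sub_one_lt {γ : ℝ} (hγ : γ ≤ 1) {m : ℕ} (hm : 0 < m) :
    ⌈γ * m⌉.toNat - 1 < m := by
  have hm' : (0 : ℝ) < m := Nat.cast_pos.mpr hm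
  have : ⌈γ * m⌉ ≤ m := Int.ceil_le.mpr (by push_cast; nlinarith)
  omega

end QuantileMech

open QuantileMech

theorem quantileMech_strategyproof_general
    (α β : ℝ) (hα : α ∈ Set.Icc (0 : ℝ) 1) (hβ : β ∈ Set.Icc (0 : ℝ) 1)
    (A : Multiset ℝ) (hA : 2 ≤ Multiset.card A)
    (n k : ℕ)
    (group : Fin n → Fin k)
    (x : Fin n → ℝ) (i : Fin n) (x' : ℝ) :
    fcost (x i) (quantileMech A α β group x) ≤
      fcost (x i) (quantileMech A α β group (Function.update x i x')) := by
  set d := group i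
  set I := (univ.filter fun j => group j = d).val
  have hI : 0 < Multiset.card I := Multiset.card_pos_iff_exists_mem.mpr ⟨i, by simp [I, d]⟩
  rw [quantileMech_eq, quantileMech_eq]
  refine fcost_chooseFacilities_le isNearestSelector_closest hA
    (by simpa using ceil_mul_toNat_sub_one_lt hβ.2 d.pos) (d := d) (fun e he => ?_) ?_
  · refine congrArg (qSel · α) (Multiset.map_congr rfl fun j hj => ?_)
    have hje : group j = e := by simpa using hj
    exact (Function.update_of_ne (fun hji => he (by rw [← hje, hji])) _ _).symm
  · have hcard : ∀ y, Multiset.card (groupLocs group y d) = Multiset.card I :=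
      fun _ => Multiset.card_map _ _
    rw [qSel_eq_orderStat, qSel_eq_orderStat, hcard, hcard]
    exact orderStat_map_mem_uIcc (ceil_mul_toNat_sub_one_lt hα.2 hI)
      fun e _ he => (Function.update_of_ne he _ _).symm

/-- For all α, β ∈ [0,1], the (α,β)-Quantile mechanism is strategyproof. -/
theorem quantileMech_strategyproof
    (α β : ℝ) (hα : α ∈ Set.Icc (0 : ℝ) 1) (hβ : β ∈ Set.Icc (0 : ℝ) 1)
    (A : Multiset ℝ) (hA : 2 ≤ Multiset.card A)
    (n k : ℕ) (hn : 0 < n) (hk : 0 < k)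
    (group : Fin n → Fin k) (hgrp : ∀ d : Fin k, ∃ i : Fin n, group i = d)
    (x : Fin n → ℝ) (i : Fin n) (x' : ℝ) :
    fcost (x i) (quantileMech A α β group x) ≤
      fcost (x i) (quantileMech A α β group (Function.update x i x')) :=
  quantileMech_strategyproof_general α β hα hβ A hA n k group x i x'

end
end

section
/- Let w be the facility location profile output by the (1/2,1/2)-Quantile mechanism on an instance. Then for every facility location profile o of that instance, AoA(w) ≤ 9 · AoA(o). In particular, the distortion of the (1/2,1/2)-Quantile mechanism under the Average-of-Average cost is at most 9. -/
noncomputable section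

/-- Average-of-Average cost. -/
def AoA {n k : ℕ} (group : Fin n → Fin k) (x : Fin n → ℝ) (w : ℝ × ℝ) : ℝ :=
  (1 / (k : ℝ)) * ∑ d : Fin k,
    (1 / (((Finset.univ.filter fun i => group i = d).card : ℝ))) *
      ∑ i ∈ Finset.univ.filter (fun i => group i = d), fcost (x i) w

/-! The `⌈m/2⌉`-th smallest of `m` reals is a median, so `m * |med - a| ≤ 2 * ∑ |s - a|` for
every `a`. Inside group `d` this bounds the cost `c d` of the group median `p d` under `o` by
twice the group's average cost. Both slots of `o` are candidates, and erasing one candidate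
leaves one of them, so every representative lies within `c d` of `p d`, hence has cost at most
`2 * c d` under `o`. The median bound across groups then puts each facility `w j` within
`4 * (∑ c d) / k ≤ 8 * AoA o` of `o j`, and the cost of an agent is 1-Lipschitz in each
facility, so `AoA w ≤ AoA o + 8 * AoA o`. -/

lemma toNat_ceil_half_mul (m : ℕ) : ⌈(1 / 2 : ℝ) * m⌉.toNat = (m + 1) / 2 := by
  obtain ⟨q, rfl | rfl⟩ := Nat.even_or_odd' m
  · have h : ⌈(1 / 2 : ℝ) * ↑(2 * q)⌉ = q := by
      rw [Int.ceil_eq_iff]; push_cast; constructor <;> linarith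
    rw [h]; omega
  · have h : ⌈(1 / 2 : ℝ) * ↑(2 * q + 1)⌉ = q + 1 := by
      rw [Int.ceil_eq_iff]; push_cast; constructor <;> linarith
    rw [h]; omega

lemma List.Pairwise.length_take_le_length_filter_le {l : List ℝ} (hl : l.Pairwise (· ≤ ·))
    {i : ℕ} (hi : i < l.length) : i + 1 ≤ (l.filter (· ≤ l[i])).length := by
  have hle : ∀ s ∈ l.take (i + 1), s ≤ l[i] := by
    intro s hs
    obtain ⟨j, hj, rfl⟩ := List.mem_iff_getElem.mp hs
    simp only [List.length_take] at hj
    rw [List.getElem_take]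
    exact hl.rel_get_of_le (a := ⟨j, by omega⟩) (b := ⟨i, hi⟩) (by simp; omega)
  calc i + 1 = ((l.take (i + 1)).filter (· ≤ l[i])).length := by
        rw [List.filter_eq_self.mpr (by simpa using hle)]; simp; omega
    _ ≤ _ := ((List.take_sublist _ _).filter _).length_le

lemma List.Pairwise.length_drop_le_length_filter_ge {l : List ℝ} (hl : l.Pairwise (· ≤ ·))
    {i : ℕ} (hi : i < l.length) : l.length - i ≤ (l.filter (l[i] ≤ ·)).length := by
  have hge : ∀ s ∈ l.drop i, l[i] ≤ s := by
    intro s hs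
    obtain ⟨j, hj, rfl⟩ := List.mem_iff_getElem.mp hs
    simp only [List.length_drop] at hj
    rw [List.getElem_drop]
    exact hl.rel_get_of_le (a := ⟨i, hi⟩) (b := ⟨i + j, by omega⟩) (by simp)
  calc l.length - i = ((l.drop i).filter (l[i] ≤ ·)).length := by
        rw [List.filter_eq_self.mpr (by simpa using hge)]; simp
    _ ≤ _ := ((List.drop_sublist _ _).filter _).length_le

def IsMedian (S : Multiset ℝ) (m : ℝ) : Prop :=
  Multiset.card S ≤ 2 * Multiset.card (S.filter (· ≤ m)) ∧
    Multiset.card S ≤ 2 * Multiset.card (S.filter (m ≤ ·))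

lemma isMedian_qSel_half (S : Multiset ℝ) : IsMedian S (qSel S (1 / 2)) := by
  rcases eq_or_ne S 0 with rfl | hS
  · simp [IsMedian]
  set l := S.sort (· ≤ ·)
  have hsorted : l.Pairwise (· ≤ ·) := S.pairwise_sort _
  have hlen : l.length = Multiset.card S := S.length_sort _
  have hfilter (p : ℝ → Prop) [DecidablePred p] :
      Multiset.card (S.filter p) = (l.filter p).length := by
    rw [← S.sort_eq (· ≤ ·), Multiset.filter_coe, Multiset.coe_card]
  have hpos : 0 < Multiset.card S := Multiset.card_pos.mpr hS
  have hi : (Multiset.card S + 1) / 2 - 1 < l.length := by omega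
  have hq : qSel S (1 / 2) = l[(Multiset.card S + 1) / 2 - 1] := by
    rw [qSel, toNat_ceil_half_mul, List.getD_eq_getElem?_getD, List.getElem?_eq_getElem hi]
    rfl
  have h₁ := hsorted.length_take_le_length_filter_le hi
  have h₂ := hsorted.length_drop_le_length_filter_ge hi
  rw [hq, IsMedian, hfilter, hfilter]
  constructor <;> omega

lemma card_filter_mul_le_sum_abs_sub (S : Multiset ℝ) (p : ℝ → Prop) [DecidablePred p]
    {t a : ℝ} (ht : ∀ s ∈ S, p s → t ≤ |s - a|) :
    Multiset.card (S.filter p) * t ≤ (S.map fun s => |s - a|).sum := by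
  have hfilter : Multiset.card (S.filter p) * t ≤ ((S.filter p).map fun s => |s - a|).sum := by
    simpa using Multiset.card_nsmul_le_sum (s := (S.filter p).map fun s => |s - a|) (a := t) (by
      simp only [Multiset.mem_map, Multiset.mem_filter]
      rintro _ ⟨s, ⟨hs, hps⟩, rfl⟩
      exact ht s hs hps)
  have hrest : 0 ≤ ((S.filter fun s => ¬p s).map fun s => |s - a|).sum :=
    Multiset.sum_nonneg fun _ h => by obtain ⟨s, -, rfl⟩ := Multiset.mem_map.mp h; positivity
  conv_rhs => rw [← S.filter_add_not p, Multiset.map_add, Multiset.sum_add]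
  linarith

lemma IsMedian.card_mul_abs_sub_le {S : Multiset ℝ} {m : ℝ} (h : IsMedian S m) (a : ℝ) :
    Multiset.card S * |m - a| ≤ 2 * (S.map fun s => |s - a|).sum := by
  obtain ⟨hle, hge⟩ := h
  rcases le_total a m with ham | hma
  · have hsum := card_filter_mul_le_sum_abs_sub S (m ≤ ·) (t := m - a)
      fun s _ hs => (sub_le_sub_right hs a).trans (le_abs_self _)
    have hcard : (Multiset.card S : ℝ) ≤ 2 * Multiset.card (S.filter (m ≤ ·)) := by
      exact_mod_cast hge
    rw [abs_of_nonneg (sub_nonneg.mpr ham)]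
    nlinarith
  · have hsum := card_filter_mul_le_sum_abs_sub S (· ≤ m) (t := a - m)
      fun s _ hs => (sub_le_sub_left hs a).trans ((le_abs_self _).trans_eq (abs_sub_comm _ _))
    have hcard : (Multiset.card S : ℝ) ≤ 2 * Multiset.card (S.filter (· ≤ m)) := by
      exact_mod_cast hle
    rw [abs_sub_comm, abs_of_nonneg (sub_nonneg.mpr hma)]
    nlinarith

lemma Finset.card_mul_abs_qSel_half_sub_le {ι : Type*} (s : Finset ι) (y : ι → ℝ) (a : ℝ) :
    s.card * |qSel (s.val.map y) (1 / 2) - a| ≤ 2 * ∑ i ∈ s, |y i - a| := by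
  simpa [Multiset.map_map] using (isMedian_qSel_half (s.val.map y)).card_mul_abs_sub_le a

lemma Finset.card_mul_fcost_qSel_half_le {ι : Type*} (s : Finset ι) (y : ι → ℝ) (o : ℝ × ℝ) :
    s.card * fcost (qSel (s.val.map y) (1 / 2)) o ≤ 2 * ∑ i ∈ s, fcost (y i) o := by
  have hmono (a : ℝ) (ha : ∀ r, |r - a| ≤ fcost r o) :
      s.card * |qSel (s.val.map y) (1 / 2) - a| ≤ 2 * ∑ i ∈ s, fcost (y i) o :=
    (s.card_mul_abs_qSel_half_sub_le y a).trans <| by gcongr with i; exact ha (y i)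
  rw [fcost, mul_max_of_nonneg _ _ (Nat.cast_nonneg _)]
  exact max_le (hmono o.1 fun _ => le_max_left _ _) (hmono o.2 fun _ => le_max_right _ _)

lemma fcost_le_abs_sub_add_fcost (y p : ℝ) (o : ℝ × ℝ) : fcost y o ≤ |y - p| + fcost p o := by
  unfold fcost
  have h₁ := abs_sub_le y p o.1
  have h₂ := abs_sub_le y p o.2
  exact max_le (h₁.trans (by gcongr; exact le_max_left _ _))
    (h₂.trans (by gcongr; exact le_max_right _ _))

lemma fcost_le_fcost_add_max (x : ℝ) (w o : ℝ × ℝ) :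
    fcost x w ≤ fcost x o + max |w.1 - o.1| |w.2 - o.2| := by
  unfold fcost
  have h₁ : |x - w.1| ≤ |x - o.1| + |o.1 - w.1| := abs_sub_le _ _ _
  have h₂ : |x - w.2| ≤ |x - o.2| + |o.2 - w.2| := abs_sub_le _ _ _
  rw [abs_sub_comm o.1, abs_sub_comm o.2] at *
  exact max_le (h₁.trans (add_le_add (le_max_left _ _) (le_max_left _ _)))
    (h₂.trans (add_le_add (le_max_right _ _) (le_max_right _ _)))

lemma abs_sub_closest_le {A : Multiset ℝ} {b : ℝ} (hb : b ∈ A) (p : ℝ) :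
    |p - closest A p| ≤ |p - b| := by
  have hne : A.toFinset.Nonempty := ⟨b, Multiset.mem_toFinset.mpr hb⟩
  rw [closest, dif_pos hne]
  exact (Finset.mem_filter.mp (Finset.min'_mem
    (A.toFinset.filter fun a => ∀ b ∈ A.toFinset, |p - a| ≤ |p - b|) _)).2 b
      (Multiset.mem_toFinset.mpr hb)

namespace IsProfile

variable {A : Multiset ℝ} {o : ℝ × ℝ}

lemma abs_sub_closest_le_fcost (ho : IsProfile A o) (p : ℝ) : |p - closest A p| ≤ fcost p o :=
  (abs_sub_closest_le ho.1 p).trans (le_max_left _ _)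

/-- Removing one candidate leaves at least one of the two slots of `o` available. -/
lemma abs_sub_closest_erase_le_fcost (ho : IsProfile A o) (a p : ℝ) :
    |p - closest (A.erase a) p| ≤ fcost p o := by
  by_cases ha : a = o.1
  · subst ha
    exact (abs_sub_closest_le ho.2 p).trans (le_max_right _ _)
  · exact (abs_sub_closest_le ((Multiset.mem_erase_of_ne (Ne.symm ha)).mpr ho.1) p).trans
      (le_max_left _ _)

lemma exists_quantileMech_eq (ho : IsProfile A o) (α β : ℝ) {n k : ℕ}
    (group : Fin n → Fin k) (x : Fin n → ℝ) :
    ∃ y z : Fin k → ℝ,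
      (∀ d, fcost (y d) o ≤ 2 * fcost (qSel (groupLocs group x d) α) o) ∧
      (∀ d, fcost (z d) o ≤ 2 * fcost (qSel (groupLocs group x d) α) o) ∧
      quantileMech A α β group x =
        (qSel (Finset.univ.val.map y) β, qSel (Finset.univ.val.map z) β) := by
  set p := fun d => qSel (groupLocs group x d) α
  have hclose {r : ℝ} {d : Fin k} (h : |p d - r| ≤ fcost (p d) o) :
      fcost r o ≤ 2 * fcost (p d) o := by
    have := fcost_le_abs_sub_add_fcost r (p d) o
    rw [abs_sub_comm] at this
    linarith
  refine ⟨_, _, fun d => hclose (ho.abs_sub_closest_le_fcost _), fun d => hclose ?_, rfl⟩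
  split_ifs
  · exact ho.abs_sub_closest_erase_le_fcost _ _
  · exact ho.abs_sub_closest_le_fcost _

end IsProfile

lemma Finset.average_le_average_add {ι : Type*} (s : Finset ι) {f g : ι → ℝ} {D : ℝ}
    (hD : 0 ≤ D) (h : ∀ i ∈ s, f i ≤ g i + D) :
    1 / (s.card : ℝ) * ∑ i ∈ s, f i ≤ 1 / (s.card : ℝ) * ∑ i ∈ s, g i + D := by
  calc 1 / (s.card : ℝ) * ∑ i ∈ s, f i ≤ 1 / (s.card : ℝ) * ∑ i ∈ s, (g i + D) := by
        gcongr with i hi; exact h i hi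
    _ = 1 / (s.card : ℝ) * ∑ i ∈ s, g i + (s.card : ℝ) / s.card * D := by
        rw [Finset.sum_add_distrib, Finset.sum_const, nsmul_eq_mul]; ring
    _ ≤ 1 / (s.card : ℝ) * ∑ i ∈ s, g i + D := by
        gcongr; exact mul_le_of_le_one_left hD (div_self_le_one _)

section AoA

variable {n k : ℕ} (group : Fin n → Fin k) (x : Fin n → ℝ)

lemma AoA_le_AoA_add_max (w o : ℝ × ℝ) :
    AoA group x w ≤ AoA group x o + max |w.1 - o.1| |w.2 - o.2| := by
  have hD : 0 ≤ max |w.1 - o.1| |w.2 - o.2| := le_max_of_le_left (abs_nonneg _)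
  have h := (Finset.univ : Finset (Fin k)).average_le_average_add hD fun d _ =>
    (Finset.univ.filter fun i => group i = d).average_le_average_add hD fun i _ =>
      fcost_le_fcost_add_max (x i) w o
  rwa [Finset.card_univ, Fintype.card_fin] at h

lemma sum_fcost_groupMedian_le (hk : 0 < k) (hgrp : ∀ d : Fin k, ∃ i : Fin n, group i = d)
    (o : ℝ × ℝ) :
    ∑ d, fcost (qSel (groupLocs group x d) (1 / 2)) o ≤ 2 * k * AoA group x o := by
  have hgroup (d : Fin k) : fcost (qSel (groupLocs group x d) (1 / 2)) o ≤
      2 * (1 / ((Finset.univ.filter fun i => group i = d).card : ℝ) *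
        ∑ i ∈ Finset.univ.filter (fun i => group i = d), fcost (x i) o) := by
    obtain ⟨i, hi⟩ := hgrp d
    have hpos : (0 : ℝ) < (Finset.univ.filter fun i => group i = d).card :=
      Nat.cast_pos.mpr (Finset.card_pos.mpr ⟨i, by simp [hi]⟩)
    have := (Finset.univ.filter fun i => group i = d).card_mul_fcost_qSel_half_le x o
    rw [groupLocs, ← mul_assoc, mul_one_div, div_mul_eq_mul_div, le_div_iff₀ hpos]
    linarith
  calc ∑ d, fcost (qSel (groupLocs group x d) (1 / 2)) o ≤ ∑ d, 2 * _ :=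
        Finset.sum_le_sum fun d _ => hgroup d
    _ = 2 * k * AoA group x o := by
        have : (k : ℝ) ≠ 0 := by positivity
        rw [AoA, ← Finset.mul_sum]; field_simp

end AoA

theorem quantileMech_AoA_distortion_le_nine_general
    (A : Multiset ℝ)
    (n k : ℕ) (hk : 0 < k)
    (group : Fin n → Fin k) (hgrp : ∀ d : Fin k, ∃ i : Fin n, group i = d)
    (x : Fin n → ℝ) (o : ℝ × ℝ) (ho : IsProfile A o) :
    AoA group x (quantileMech A (1 / 2) (1 / 2) group x) ≤ 9 * AoA group x o := by
  obtain ⟨y, z, hy, hz, hw⟩ := ho.exists_quantileMech_eq (1 / 2) (1 / 2) group x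
  have hmed := sum_fcost_groupMedian_le group x hk hgrp o
  have hfacility (r : Fin k → ℝ)
      (hr : ∀ d, fcost (r d) o ≤ 2 * fcost (qSel (groupLocs group x d) (1 / 2)) o) :
      fcost (qSel (Finset.univ.val.map r) (1 / 2)) o ≤ 8 * AoA group x o := by
    have hsel := Finset.univ.card_mul_fcost_qSel_half_le r o
    rw [Finset.card_univ, Fintype.card_fin] at hsel
    refine le_of_mul_le_mul_left ?_ (Nat.cast_pos.mpr hk : (0 : ℝ) < k)
    calc (k : ℝ) * fcost (qSel (Finset.univ.val.map r) (1 / 2)) o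
        ≤ 2 * ∑ d, fcost (r d) o := hsel
      _ ≤ 2 * ∑ d, 2 * fcost (qSel (groupLocs group x d) (1 / 2)) o := by
          gcongr with d; exact hr d
      _ ≤ k * (8 * AoA group x o) := by rw [← Finset.mul_sum]; linarith
  rw [hw]
  calc AoA group x (_, _)
      ≤ AoA group x o + max |qSel (Finset.univ.val.map y) (1 / 2) - o.1|
          |qSel (Finset.univ.val.map z) (1 / 2) - o.2| := AoA_le_AoA_add_max group x _ o
    _ ≤ AoA group x o + 8 * AoA group x o := by
        gcongr
        exact max_le ((le_max_left _ _).trans (hfacility y hy))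
          ((le_max_right _ _).trans (hfacility z hz))
    _ = 9 * AoA group x o := by ring

/-- For the Average-of-Average cost, the distortion of the (1/2,1/2)-Quantile
mechanism is at most 9. -/
theorem quantileMech_AoA_distortion_le_nine
    (A : Multiset ℝ) (hA : 2 ≤ Multiset.card A)
    (n k : ℕ) (hn : 0 < n) (hk : 0 < k)
    (group : Fin n → Fin k) (hgrp : ∀ d : Fin k, ∃ i : Fin n, group i = d)
    (x : Fin n → ℝ) (o : ℝ × ℝ) (ho : IsProfile A o) :
    AoA group x (quantileMech A (1 / 2) (1 / 2) group x) ≤ 9 * AoA group x o :=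
  quantileMech_AoA_distortion_le_nine_general A n k hk group hgrp x o ho

end
end

section
/- Let w be the facility location profile output by the (1,1)-Quantile mechanism on an instance. Then for every facility location profile o of that instance, MoM(w) ≤ 3 · MoM(o). In particular, the distortion of the (1,1)-Quantile mechanism under the Max-of-Max cost is at most 3. -/
noncomputable section

/-- Max-of-Max cost. -/
def MoM {n : ℕ} (x : Fin n → ℝ) (w : ℝ × ℝ) : ℝ :=
  ⨆ i : Fin n, fcost (x i) w

lemma closest_mem (A : Multiset ℝ) (p : ℝ) (h : A ≠ 0) : closest A p ∈ A := by
  have hne : A.toFinset.Nonempty := by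
    obtain ⟨a, ha⟩ := Multiset.exists_mem_of_ne_zero h
    exact ⟨a, Multiset.mem_toFinset.mpr ha⟩
  rw [closest, dif_pos hne]
  exact Multiset.mem_toFinset.mp (Finset.mem_filter.mp (Finset.min'_mem _ _)).1

lemma closest_spec (A : Multiset ℝ) (p : ℝ) (h : A ≠ 0) (b : ℝ) (hb : b ∈ A) :
    |p - closest A p| ≤ |p - b| := by
  have hne : A.toFinset.Nonempty := by
    obtain ⟨a, ha⟩ := Multiset.exists_mem_of_ne_zero h
    exact ⟨a, Multiset.mem_toFinset.mpr ha⟩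
  rw [closest, dif_pos hne]
  generalize_proofs hp
  have hmem := Finset.min'_mem _ hp
  rw [Finset.mem_filter] at hmem
  exact hmem.2 b (Multiset.mem_toFinset.mpr hb)

lemma qSel_one_mem (S : Multiset ℝ) (hS : S ≠ 0) : qSel S 1 ∈ S := by
  have hcard : 0 < Multiset.card S := Multiset.card_pos.mpr hS
  have hlen : (S.sort (· ≤ ·)).length = Multiset.card S := Multiset.length_sort _
  have hidx : (⌈(1:ℝ) * (Multiset.card S : ℝ)⌉.toNat - 1) < (S.sort (· ≤ ·)).length := by
    rw [hlen, one_mul, Int.ceil_natCast, Int.toNat_natCast]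
    omega
  rw [qSel, List.getD_eq_getElem _ _ hidx]
  rw [← Multiset.mem_sort (· ≤ ·)]
  exact List.getElem_mem hidx

/-- For the Max-of-Max cost, the distortion of the (1,1)-Quantile mechanism is at most 3. -/
theorem quantileMech_MoM_distortion_le_three
    (A : Multiset ℝ) (hA : 2 ≤ Multiset.card A)
    (n k : ℕ) (hn : 0 < n) (hk : 0 < k)
    (group : Fin n → Fin k) (hgrp : ∀ d : Fin k, ∃ i : Fin n, group i = d)
    (x : Fin n → ℝ) (o : ℝ × ℝ) (ho : IsProfile A o) :
    MoM x (quantileMech A 1 1 group x) ≤ 3 * MoM x o := by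
  classical
  obtain ⟨o1A, o2A⟩ := ho
  set M := MoM x o with hMdef
  have hAne : A ≠ 0 := by
    intro h; rw [h] at hA; simp at hA
  have hbdd : BddAbove (Set.range fun i => fcost (x i) o) :=
    (Set.finite_range _).bddAbove
  have hM : ∀ j : Fin n, fcost (x j) o ≤ M := fun j => le_ciSup hbdd j
  have hMo1 : ∀ j, |x j - o.1| ≤ M := fun j => le_trans (le_max_left _ _) (hM j)
  have hMo2 : ∀ j, |x j - o.2| ≤ M := fun j => le_trans (le_max_right _ _) (hM j)
  have hgne : ∀ d, groupLocs group x d ≠ 0 := by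
    intro d
    obtain ⟨i, hi⟩ := hgrp d
    have : x i ∈ groupLocs group x d := by
      simp [groupLocs]
      exact ⟨i, hi, rfl⟩
    exact fun h => by simp [h] at this
  set m : Fin k → ℝ := fun d => qSel (groupLocs group x d) 1 with hm
  have hmA : ∀ d, ∃ j, group j = d ∧ x j = m d := by
    intro d
    have hmem := qSel_one_mem _ (hgne d)
    simp only [groupLocs, Multiset.mem_map] at hmem
    obtain ⟨j, hj1, hj2⟩ := hmem
    simp only [Finset.mem_val, Finset.mem_filter] at hj1
    exact ⟨j, hj1.2, hj2⟩
  set y1 : Fin k → ℝ := fun d => closest A (m d) with hy1def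
  set y2 : Fin k → ℝ := fun d => closest (A.erase (y1 d)) (m d) with hy2def
  have hy1A : ∀ d, y1 d ∈ A := fun d => closest_mem A _ hAne
  have herasene : ∀ d, A.erase (y1 d) ≠ 0 := by
    intro d
    have hc : Multiset.card (A.erase (y1 d)) = Multiset.card A - 1 :=
      Multiset.card_erase_of_mem (hy1A d)
    have : 0 < Multiset.card (A.erase (y1 d)) := by omega
    exact Multiset.card_pos.mp this
  have hxmM : ∀ d j, x j = m d → |m d - o.1| ≤ M ∧ |m d - o.2| ≤ M := by
    intro d j hxj
    exact ⟨hxj ▸ hMo1 j, hxj ▸ hMo2 j⟩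
  have hy1close : ∀ d, |m d - y1 d| ≤ M := by
    intro d
    obtain ⟨j, hj, hxj⟩ := hmA d
    exact le_trans (closest_spec A (m d) hAne o.1 o1A) (hxmM d j hxj).1
  have hy2close : ∀ d, |m d - y2 d| ≤ M := by
    intro d
    obtain ⟨j, hj, hxj⟩ := hmA d
    by_cases h : o.1 = y1 d
    · have ho2 : o.2 ∈ A.erase (y1 d) := h ▸ o2A
      exact le_trans (closest_spec _ (m d) (herasene d) o.2 ho2) (hxmM d j hxj).2
    · have ho1 : o.1 ∈ A.erase (y1 d) := (Multiset.mem_erase_of_ne h).mpr o1A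
      exact le_trans (closest_spec _ (m d) (herasene d) o.1 ho1) (hxmM d j hxj).1
  set w := quantileMech A 1 1 group x with hwdef
  have hw1 : w.1 = qSel (Finset.univ.val.map y1) 1 := rfl
  have hw2 : w.2 = qSel (Finset.univ.val.map fun d => if y1 d = w.1 then y2 d else y1 d) 1 :=
    rfl
  have hkne : (Finset.univ.val.map y1 : Multiset ℝ) ≠ 0 := by
    intro h
    have := congrArg Multiset.card h
    simp at this
    omega
  have hkne2 : (Finset.univ.val.map fun d => if y1 d = w.1 then y2 d else y1 d : Multiset ℝ)
      ≠ 0 := by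
    intro h
    have := congrArg Multiset.card h
    simp at this
    omega
  have hw1mem : ∃ d, y1 d = w.1 := by
    have := qSel_one_mem _ hkne
    rw [← hw1] at this
    simp only [Multiset.mem_map, Finset.mem_val, Finset.mem_univ, true_and] at this
    obtain ⟨d, hd⟩ := this
    exact ⟨d, hd⟩
  have hw2mem : ∃ d, |m d - w.2| ≤ M := by
    have := qSel_one_mem _ hkne2
    rw [← hw2] at this
    simp only [Multiset.mem_map, Finset.mem_val, Finset.mem_univ, true_and] at this
    obtain ⟨d, hd⟩ := this
    refine ⟨d, ?_⟩
    by_cases h : y1 d = w.1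
    · rw [if_pos h] at hd
      exact hd ▸ hy2close d
    · rw [if_neg h] at hd
      exact hd ▸ hy1close d
  have hfin : ∀ i, fcost (x i) w ≤ 3 * M := by
    intro i
    have key : ∀ u : ℝ, (∃ d, |m d - u| ≤ M) → |x i - u| ≤ 3 * M := by
      rintro u ⟨d, hd⟩
      obtain ⟨j, hj, hxj⟩ := hmA d
      have h1 : |x i - u| ≤ |x i - o.1| + |o.1 - m d| + |m d - u| := by
        have t1 : |x i - u| ≤ |x i - m d| + |m d - u| := abs_sub_le _ _ _
        have t2 : |x i - m d| ≤ |x i - o.1| + |o.1 - m d| := abs_sub_le _ _ _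
        linarith
      have h2 : |o.1 - m d| ≤ M := by
        rw [abs_sub_comm]
        exact (hxmM d j hxj).1
      have h3 := hMo1 i
      linarith
    have g1 : |x i - w.1| ≤ 3 * M := by
      apply key
      obtain ⟨d, hd⟩ := hw1mem
      exact ⟨d, hd ▸ hy1close d⟩
    have g2 : |x i - w.2| ≤ 3 * M := key _ hw2mem
    exact max_le g1 g2
  have : Nonempty (Fin n) := ⟨⟨0, hn⟩⟩
  exact ciSup_le hfin

end
end

section
/- Let α ∈ (0,1) and let w be the facility location profile output by the (α,1)-Quantile mechanism on an instance. Then for every facility location profile o of that instance, MoA(w) ≤ max{1 + 2(1 − α)/α, 1 + 2/(1 − α)} · MoA(o). In particular, the distortion of the (α,1)-Quantile mechanism under the Max-of-Average cost is at most max{1 + 2(1 − α)/α, 1 + 2/(1 − α)}. -/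
noncomputable section

/-- Max-of-Average cost. -/
def MoA {n k : ℕ} (group : Fin n → Fin k) (x : Fin n → ℝ) (w : ℝ × ℝ) : ℝ :=
  ⨆ d : Fin k,
    (1 / (((Finset.univ.filter fun i => group i = d).card : ℝ))) *
      ∑ i ∈ Finset.univ.filter (fun i => group i = d), fcost (x i) w

/- ### auxiliary lemmas -/

lemma fcost_eq (x : ℝ) (w : ℝ × ℝ) :
    fcost x w = max (max w.1 w.2 - x) (x - min w.1 w.2) := by
  unfold fcost
  rw [abs_eq_max_neg, abs_eq_max_neg, neg_sub, neg_sub, max_max_max_comm,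
    max_sub_sub_right, max_sub_sub_left, max_comm]

lemma fcost_nonneg (x : ℝ) (w : ℝ × ℝ) : 0 ≤ fcost x w :=
  le_trans (abs_nonneg _) (le_max_left _ _)

lemma closest_spec_s5 (A : Multiset ℝ) (hA : A ≠ 0) (p : ℝ) :
    closest A p ∈ A ∧ ∀ c ∈ A, |p - closest A p| ≤ |p - c| := by
  have h : A.toFinset.Nonempty := Multiset.toFinset_nonempty.mpr hA
  unfold closest
  rw [dif_pos h]
  have hm := Finset.min'_mem (A.toFinset.filter fun a => ∀ b ∈ A.toFinset, |p - a| ≤ |p - b|)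
      (by
        obtain ⟨a, ha, hmin⟩ := A.toFinset.exists_min_image (fun a => |p - a|) h
        exact ⟨a, Finset.mem_filter.mpr ⟨ha, hmin⟩⟩)
  rw [Finset.mem_filter] at hm
  exact ⟨Multiset.mem_toFinset.mp hm.1, fun c hc => hm.2 c (Multiset.mem_toFinset.mpr hc)⟩

lemma qSel_spec (S : Multiset ℝ) (γ : ℝ) (hS : S ≠ 0) (h0 : 0 < γ) (h1 : γ ≤ 1) :
    qSel S γ ∈ S ∧
    ⌈γ * (Multiset.card S : ℝ)⌉.toNat ≤ Multiset.card (S.filter (· ≤ qSel S γ)) ∧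
    Multiset.card S + 1 ≤
      ⌈γ * (Multiset.card S : ℝ)⌉.toNat + Multiset.card (S.filter (fun v => qSel S γ ≤ v)) := by
  set m := Multiset.card S with hm
  have hm1 : 1 ≤ m := by
    have := Multiset.card_pos.mpr hS
    omega
  set c := ⌈γ * (m : ℝ)⌉.toNat with hc
  have hc1 : 1 ≤ c := by
    have : (0 : ℝ) < γ * m := by positivity
    have : 1 ≤ ⌈γ * (m : ℝ)⌉ := by exact_mod_cast Int.ceil_pos.mpr this
    omega
  have hcm : c ≤ m := by
    have : ⌈γ * (m : ℝ)⌉ ≤ (m : ℤ) := Int.ceil_le.mpr (by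
      have h1m : (1:ℝ) ≤ (m:ℝ) := by exact_mod_cast hm1
      push_cast
      nlinarith)
    omega
  set L := S.sort (· ≤ ·) with hL
  have hlen : L.length = m := Multiset.length_sort _
  have hidx : c - 1 < L.length := by omega
  have hsorted : List.Pairwise (· ≤ ·) L := Multiset.pairwise_sort _ _
  have hq : qSel S γ = L[c-1] := by
    unfold qSel
    rw [List.getD_eq_getElem _ _ hidx]
  have hSL : (L : Multiset ℝ) = S := Multiset.sort_eq _ _
  refine ⟨?_, ?_, ?_⟩
  · rw [hq, ← hSL]
    exact_mod_cast List.getElem_mem hidx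
  · have hsub : ((L.take c : List ℝ) : Multiset ℝ) ≤ S.filter (· ≤ qSel S γ) := by
      rw [Multiset.le_filter]
      constructor
      · rw [← hSL]
        exact_mod_cast (List.take_sublist c L).subperm
      · intro a ha
        rw [Multiset.mem_coe, List.mem_iff_getElem] at ha
        obtain ⟨i, hi, rfl⟩ := ha
        rw [List.getElem_take, hq]
        have hi' : i < c := by simpa [hlen] using (lt_of_lt_of_le hi (by simp [List.length_take]))
        exact hsorted.rel_get_of_le (a := ⟨i, by omega⟩) (b := ⟨c-1, hidx⟩) (by simp; omega)
    have := Multiset.card_le_card hsub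
    simpa [hlen, min_eq_left (show c ≤ m by omega)] using this
  · have hsub : ((L.drop (c-1) : List ℝ) : Multiset ℝ) ≤ S.filter (fun v => qSel S γ ≤ v) := by
      rw [Multiset.le_filter]
      constructor
      · rw [← hSL]
        exact_mod_cast (List.drop_sublist (c-1) L).subperm
      · intro a ha
        rw [Multiset.mem_coe, List.mem_iff_getElem] at ha
        obtain ⟨i, hi, rfl⟩ := ha
        rw [List.getElem_drop, hq]
        exact hsorted.rel_get_of_le (a := ⟨c-1, hidx⟩) (b := ⟨c-1+i, by
          have := hi; simp [List.length_drop] at this; omega⟩) (by simp)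
    have := Multiset.card_le_card hsub
    simp [hlen] at this
    omega

lemma qSel_one_max (S : Multiset ℝ) (hS : S ≠ 0) :
    qSel S 1 ∈ S ∧ ∀ v ∈ S, v ≤ qSel S 1 := by
  obtain ⟨hmem, hcnt, -⟩ := qSel_spec S 1 hS one_pos le_rfl
  refine ⟨hmem, ?_⟩
  have hceil : ⌈(1:ℝ) * (Multiset.card S : ℝ)⌉.toNat = Multiset.card S := by
    rw [one_mul, Int.ceil_natCast]
    exact Int.toNat_natCast _
  rw [hceil] at hcnt
  have hle : S.filter (· ≤ qSel S 1) ≤ S := Multiset.filter_le _ _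
  have heq : S.filter (· ≤ qSel S 1) = S :=
    Multiset.eq_of_le_of_card_le hle hcnt
  intro v hv
  have : v ∈ S.filter (· ≤ qSel S 1) := by rw [heq]; exact hv
  exact (Multiset.mem_filter.mp this).2



lemma avg_lower (S : Multiset ℝ) (f : ℝ → ℝ) (hf : ∀ v ∈ S, 0 ≤ f v)
    (T : Multiset ℝ) (hT : T ≤ S) (c : ℝ) (h : ∀ v ∈ T, c ≤ f v) (hc : 0 ≤ c) :
    (Multiset.card T : ℝ) * c ≤ (S.map f).sum := by
  obtain ⟨U, rfl⟩ := Multiset.le_iff_exists_add.mp hT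
  rw [Multiset.map_add, Multiset.sum_add]
  have h1 : (Multiset.card T : ℝ) * c ≤ (T.map f).sum := by
    have h2 : ((T.map (fun _ => c)).sum) ≤ (T.map f).sum := Multiset.sum_map_le_sum_map _ _ h
    simpa [Multiset.map_const', Multiset.sum_replicate, nsmul_eq_mul] using h2
  have h2 : 0 ≤ (U.map f).sum := by
    apply Multiset.sum_nonneg
    intro y hy
    obtain ⟨v, hv, rfl⟩ := Multiset.mem_map.mp hy
    exact hf v (by rw [Multiset.mem_add]; right; exact hv)
  linarith

set_option maxHeartbeats 4000000 in
/-- For the Max-of-Average cost, the distortion of the (α,1)-Quantile mechanism is at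
most max {1 + 2(1-α)/α, 1 + 2/(1-α)}. -/
theorem quantileMech_MoA_distortion
    (α : ℝ) (hα : α ∈ Set.Ioo (0 : ℝ) 1)
    (A : Multiset ℝ) (hA : 2 ≤ Multiset.card A)
    (n k : ℕ) (hn : 0 < n) (hk : 0 < k)
    (group : Fin n → Fin k) (hgrp : ∀ d : Fin k, ∃ i : Fin n, group i = d)
    (x : Fin n → ℝ) (o : ℝ × ℝ) (ho : IsProfile A o) :
    MoA group x (quantileMech A α 1 group x) ≤
      max (1 + 2 * (1 - α) / α) (1 + 2 / (1 - α)) * MoA group x o := by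
  obtain ⟨hα0, hα1⟩ := hα
  obtain ⟨ho1, ho2⟩ := ho
  have h1α : 0 < 1 - α := by linarith
  have hA0 : A ≠ 0 := by
    intro h
    rw [h] at hA
    simp at hA
  have ho2A : o.2 ∈ A := Multiset.mem_of_mem_erase ho2
  set a := min o.1 o.2 with ha
  set b := max o.1 o.2 with hb
  have hab : a ≤ b := min_le_max
  have hbA : b ∈ A := by
    rcases max_choice o.1 o.2 with h | h
    · rw [hb, h]; exact ho1
    · rw [hb, h]; exact ho2A
  have hfo : ∀ v : ℝ, fcost v o = max (b - v) (v - a) := fun v => fcost_eq v o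
  -- groups
  set F : Fin k → Finset (Fin n) := fun d => Finset.univ.filter (fun i => group i = d) with hF
  have hFpos : ∀ d, 0 < (F d).card := by
    intro d
    obtain ⟨i, hi⟩ := hgrp d
    exact Finset.card_pos.mpr ⟨i, by simp [hF, hi]⟩
  set S : Fin k → Multiset ℝ := fun d => groupLocs group x d with hSdef
  have hcardS : ∀ d, Multiset.card (S d) = (F d).card := by
    intro d
    simp [hSdef, groupLocs, hF, Finset.card]
  have hS0 : ∀ d, S d ≠ 0 := by
    intro d h
    have h1 := hcardS d
    have h2 := hFpos d
    rw [h] at h1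
    simp at h1
    omega
  have hsum : ∀ (d : Fin k) (g : ℝ → ℝ),
      ((S d).map g).sum = ∑ i ∈ F d, g (x i) := by
    intro d g
    rw [hSdef]
    show ((((F d).val).map x).map g).sum = _
    rw [Multiset.map_map]
    rfl
  -- optimum value
  set O := MoA group x o with hO
  haveI : Nonempty (Fin k) := Fin.pos_iff_nonempty.mp hk
  have hMoA : O = ⨆ d, (1 / ((F d).card : ℝ)) * ∑ i ∈ F d, fcost (x i) o := rfl
  have havgO : ∀ d, (1 / ((F d).card : ℝ)) * ∑ i ∈ F d, fcost (x i) o ≤ O := by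
    intro d
    rw [hMoA]
    exact le_ciSup (f := fun d : Fin k => (1 / ((F d).card : ℝ)) * ∑ i ∈ F d, fcost (x i) o)
      (Finite.bddAbove_range _) d
  have hOnn : 0 ≤ O := by
    obtain ⟨d⟩ := ‹Nonempty (Fin k)›
    refine le_trans ?_ (havgO d)
    have : (0:ℝ) ≤ ∑ i ∈ F d, fcost (x i) o :=
      Finset.sum_nonneg fun i _ => fcost_nonneg _ _
    positivity
  -- mechanism pieces
  set P : Fin k → ℝ := fun d => qSel (groupLocs group x d) α with hP
  set y1 : Fin k → ℝ := fun d => closest A (P d) with hy1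
  set y2 : Fin k → ℝ := fun d => closest (A.erase (y1 d)) (P d) with hy2
  set w1 : ℝ := qSel (Finset.univ.val.map y1) 1 with hw1
  set z : Fin k → ℝ := fun d => if y1 d = w1 then y2 d else y1 d with hz
  set w2 : ℝ := qSel (Finset.univ.val.map z) 1 with hw2
  have hmech : quantileMech A α 1 group x = (w1, w2) := rfl
  have hzdef : ∀ d, z d = if y1 d = w1 then y2 d else y1 d := fun d => rfl
  have hPdef : ∀ d, P d = qSel (S d) α := fun d => rfl
  have hMoA2 : MoA group x (w1, w2)
      = ⨆ d, (1 / ((F d).card : ℝ)) * ∑ i ∈ F d, fcost (x i) (w1, w2) := rfl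
  -- sums of optimum costs
  have hsumW : ∀ (d : Fin k) (w : ℝ × ℝ),
      ((S d).map (fun v => fcost v w)).sum = ∑ i ∈ F d, fcost (x i) w := by
    intro d w
    have hSd : S d = ((F d).val).map x := rfl
    rw [hSd, Multiset.map_map]
    rfl
  have hy1def : ∀ d, y1 d = closest A (P d) := fun d => rfl
  have hy2def : ∀ d, y2 d = closest (A.erase (y1 d)) (P d) := fun d => rfl
  clear_value a b F S O P y1 y2 w1 z w2
  have hSumO : ∀ d, ((S d).map (fun v => fcost v o)).sum ≤ ((F d).card : ℝ) * O := by
    intro d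
    have hOd := havgO d
    have hne : (0:ℝ) < ((F d).card : ℝ) := by exact_mod_cast hFpos d
    rw [← hsumW d o] at hOd
    have h2 := mul_le_mul_of_nonneg_left hOd hne.le
    have h3 : ((F d).card : ℝ) * ((1 / ((F d).card : ℝ)) *
        ((S d).map (fun v => fcost v o)).sum) = ((S d).map (fun v => fcost v o)).sum := by
      field_simp
    linarith
  -- quantile count facts (real versions)
  have hcdge : ∀ d, α * ((Multiset.card (S d)) : ℝ) ≤
      ((⌈α * ((Multiset.card (S d)) : ℝ)⌉.toNat : ℕ) : ℝ) := by
    intro d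
    have h1 := Int.le_ceil (α * ((Multiset.card (S d)) : ℝ))
    have h2 : (0:ℤ) ≤ ⌈α * ((Multiset.card (S d)) : ℝ)⌉ := Int.ceil_nonneg (by positivity)
    have h3 : ((⌈α * ((Multiset.card (S d)) : ℝ)⌉.toNat : ℕ) : ℝ)
        = ((⌈α * ((Multiset.card (S d)) : ℝ)⌉ : ℤ) : ℝ) := by exact_mod_cast Int.toNat_of_nonneg h2
    linarith
  have hcdlt : ∀ d, ((⌈α * ((Multiset.card (S d)) : ℝ)⌉.toNat : ℕ) : ℝ) <
      α * ((Multiset.card (S d)) : ℝ) + 1 := by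
    intro d
    have h2 : (0:ℤ) ≤ ⌈α * ((Multiset.card (S d)) : ℝ)⌉ := Int.ceil_nonneg (by positivity)
    have h3 : ((⌈α * ((Multiset.card (S d)) : ℝ)⌉.toNat : ℕ) : ℝ)
        = ((⌈α * ((Multiset.card (S d)) : ℝ)⌉ : ℤ) : ℝ) := by exact_mod_cast Int.toNat_of_nonneg h2
    have h4 := Int.ceil_lt_add_one (α * ((Multiset.card (S d)) : ℝ))
    linarith
  clear hMoA havgO hsum hO hgrp hn
  -- lower bounds from quantiles
  have hLB1 : ∀ d, α * (b - P d) ≤ O := by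
    intro d
    have hne : (0:ℝ) < ((F d).card : ℝ) := by exact_mod_cast hFpos d
    rcases le_or_gt (b - P d) 0 with h0 | h0
    · nlinarith
    obtain ⟨-, hc1, -⟩ := qSel_spec (S d) α (hS0 d) hα0 hα1.le
    have hPd := hPdef d
    rw [← hPd] at hc1
    have hTle : ∀ v ∈ (S d).filter (· ≤ P d), b - P d ≤ fcost v o := by
      intro v hv
      have hvP := (Multiset.mem_filter.mp hv).2
      rw [hfo v]
      exact le_trans (by linarith) (le_max_left _ _)
    have hlow := avg_lower (S d) (fun v => fcost v o) (fun v _ => fcost_nonneg v o)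
      ((S d).filter (· ≤ P d)) (Multiset.filter_le _ _) (b - P d) hTle h0.le
    have hcd := hcdge d
    have hcard : ((⌈α * ((Multiset.card (S d)) : ℝ)⌉.toNat : ℕ) : ℝ)
        ≤ ((Multiset.card ((S d).filter (· ≤ P d)) : ℕ) : ℝ) := by exact_mod_cast hc1
    have hsc : ((Multiset.card (S d)) : ℝ) = ((F d).card : ℝ) := by exact_mod_cast hcardS d
    have hSumE := hSumO d
    nlinarith [mul_le_mul_of_nonneg_right (le_trans hcd hcard) h0.le, hSumE]
  have hLB2 : ∀ d, (1 - α) * (P d - a) ≤ O := by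
    intro d
    have hne : (0:ℝ) < ((F d).card : ℝ) := by exact_mod_cast hFpos d
    rcases le_or_gt (P d - a) 0 with h0 | h0
    · nlinarith
    obtain ⟨-, -, hc2⟩ := qSel_spec (S d) α (hS0 d) hα0 hα1.le
    have hPd := hPdef d
    rw [← hPd] at hc2
    have hTle : ∀ v ∈ (S d).filter (fun v => P d ≤ v), P d - a ≤ fcost v o := by
      intro v hv
      have hvP := (Multiset.mem_filter.mp hv).2
      rw [hfo v]
      exact le_trans (by linarith) (le_max_right _ _)
    have hlow := avg_lower (S d) (fun v => fcost v o) (fun v _ => fcost_nonneg v o)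
      ((S d).filter (fun v => P d ≤ v)) (Multiset.filter_le _ _) (P d - a) hTle h0.le
    have hcd := hcdlt d
    have hcard : ((Multiset.card (S d) : ℕ) : ℝ) + 1
        ≤ ((⌈α * ((Multiset.card (S d)) : ℝ)⌉.toNat : ℕ) : ℝ)
          + ((Multiset.card ((S d).filter (fun v => P d ≤ v)) : ℕ) : ℝ) := by exact_mod_cast hc2
    have hsc : ((Multiset.card (S d)) : ℝ) = ((F d).card : ℝ) := by exact_mod_cast hcardS d
    have hSumE := hSumO d
    have hcard2 : (1 - α) * ((Multiset.card (S d)) : ℝ)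
        ≤ ((Multiset.card ((S d).filter (fun v => P d ≤ v)) : ℕ) : ℝ) := by linarith
    nlinarith [mul_le_mul_of_nonneg_right hcard2 h0.le]
  -- representative properties
  have hy1spec : ∀ d, y1 d ∈ A ∧ ∀ c ∈ A, |P d - y1 d| ≤ |P d - c| := by
    intro d
    rw [hy1def d]
    exact closest_spec_s5 A hA0 (P d)
  have herase0 : ∀ d, A.erase (y1 d) ≠ 0 := by
    intro d h
    have h1 : Multiset.card (A.erase (y1 d)) = Multiset.card A - 1 :=
      Multiset.card_erase_of_mem (hy1spec d).1
    rw [h] at h1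
    simp at h1
    omega
  have hy2spec : ∀ d, y2 d ∈ A.erase (y1 d) ∧ ∀ c ∈ A.erase (y1 d), |P d - y2 d| ≤ |P d - c| := by
    intro d
    rw [hy2def d]
    exact closest_spec_s5 (A.erase (y1 d)) (herase0 d) (P d)
  have hMo : ∀ d, max |P d - o.1| |P d - o.2| = max (b - P d) (P d - a) := fun d => hfo (P d)
  have hy1M : ∀ d, |P d - y1 d| ≤ max (b - P d) (P d - a) := by
    intro d
    rw [← hMo d]
    exact le_trans ((hy1spec d).2 o.1 ho1) (le_max_left _ _)
  have hy1b : ∀ d, |P d - y1 d| ≤ |P d - b| := fun d => (hy1spec d).2 b hbA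
  have hy2M : ∀ d, |P d - y2 d| ≤ max (b - P d) (P d - a) := by
    intro d
    rw [← hMo d]
    by_cases hc : y1 d = o.1
    · refine le_trans ((hy2spec d).2 o.2 ?_) (le_max_right _ _)
      rw [hc]; exact ho2
    · refine le_trans ((hy2spec d).2 o.1 ?_) (le_max_left _ _)
      exact (Multiset.mem_erase_of_ne (fun h => hc h.symm)).mpr ho1
  -- aggregation facts
  have hky1 : (Finset.univ.val.map y1 : Multiset ℝ) ≠ 0 := by
    intro h
    have := congrArg Multiset.card h
    simp at this
    omega
  have hkz : (Finset.univ.val.map z : Multiset ℝ) ≠ 0 := by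
    intro h
    have := congrArg Multiset.card h
    simp at this
    omega
  obtain ⟨hw1mem, hw1max⟩ := qSel_one_max _ hky1
  obtain ⟨hw2mem, hw2max⟩ := qSel_one_max _ hkz
  rw [← hw1] at hw1mem hw1max
  rw [← hw2] at hw2mem hw2max
  obtain ⟨D1, -, hD1⟩ := Multiset.mem_map.mp hw1mem
  obtain ⟨D2, -, hD2⟩ := Multiset.mem_map.mp hw2mem
  have hw1ge : ∀ d, y1 d ≤ w1 := fun d => hw1max _ (Multiset.mem_map_of_mem _ (Finset.mem_val.mpr (Finset.mem_univ d)))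
  have hw2ge : ∀ d, z d ≤ w2 := fun d => hw2max _ (Multiset.mem_map_of_mem _ (Finset.mem_val.mpr (Finset.mem_univ d)))
  set l := min w1 w2 with hl
  set u := max w1 w2 with hu
  -- (M1) lower bound on l, for every group e
  have hM1 : ∀ e, P e - max (b - P e) (P e - a) ≤ l := by
    intro e
    have h1 := abs_sub_le_iff.mp (hy1M e)
    have h2 := abs_sub_le_iff.mp (hy2M e)
    have hzge : P e - max (b - P e) (P e - a) ≤ z e := by
      by_cases hc : y1 e = w1
      · rw [hzdef e, if_pos hc]; linarith [h2.1]
      · rw [hzdef e, if_neg hc]; linarith [h1.1]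
    exact le_min (by linarith [hw1ge e, h1.1]) (by linarith [hw2ge e])
  -- (M2) upper bound on u
  have hM2 : u - b ≤ 2 / (1 - α) * O := by
    have hRHS : 0 ≤ 2 / (1 - α) * O := by positivity
    have hbound : ∀ d, (y1 d ≤ max b (2 * P d - a)) ∧ (y2 d ≤ max b (2 * P d - a)) := by
      intro d
      have h1 := abs_sub_le_iff.mp (hy1M d)
      have h2 := abs_sub_le_iff.mp (hy2M d)
      rcases max_cases (b - P d) (P d - a) with ⟨hm, -⟩ | ⟨hm, -⟩ <;> rw [hm] at h1 h2
      · exact ⟨le_trans (by linarith [h1.2]) (le_max_left _ _), le_trans (by linarith [h2.2]) (le_max_left _ _)⟩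
      · exact ⟨le_trans (by linarith [h1.2]) (le_max_right _ _), le_trans (by linarith [h2.2]) (le_max_right _ _)⟩
    have key : ∀ d, (y1 d - b ≤ 2 / (1 - α) * O) ∧ (y2 d - b ≤ 2 / (1 - α) * O) := by
      intro d
      have hLd := hLB2 d
      have hb2 : 2 * P d - a - b ≤ 2 / (1 - α) * O := by
        rw [div_mul_eq_mul_div, le_div_iff₀ h1α]
        have hstep : 2 * P d - a - b ≤ 2 * (P d - a) := by linarith
        nlinarith [mul_le_mul_of_nonneg_right hstep h1α.le]
      obtain ⟨hb1, hb2'⟩ := hbound d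
      constructor
      · rcases max_cases b (2 * P d - a) with ⟨hm, -⟩ | ⟨hm, -⟩ <;> rw [hm] at hb1 <;> linarith
      · rcases max_cases b (2 * P d - a) with ⟨hm, -⟩ | ⟨hm, -⟩ <;> rw [hm] at hb2' <;> linarith
    have hzb : z D2 - b ≤ 2 / (1 - α) * O := by
      by_cases hc : y1 D2 = w1
      · rw [hzdef D2, if_pos hc]; exact (key D2).2
      · rw [hzdef D2, if_neg hc]; exact (key D2).1
    rw [hu]
    rcases max_cases w1 w2 with ⟨hm, -⟩ | ⟨hm, -⟩ <;> rw [hm]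
    · rw [← hD1]; exact (key D1).1
    · rw [← hD2]; exact hzb
  -- (M3) exclusion: if b < u then a ≤ l
  have hM3 : b < u → a ≤ l := by
    intro hbu
    rcases le_or_gt w1 b with hw1b | hw1b
    · -- w1 ≤ b < u, so u = w2
      have hw2b : b < w2 := by
        rw [hu] at hbu
        rcases max_cases w1 w2 with ⟨hm, -⟩ | ⟨hm, -⟩ <;> rw [hm] at hbu <;> [linarith; exact hbu]
      have hzE : z D2 = w2 := hD2
      have hy1E : y1 D2 = w1 ∧ z D2 = y2 D2 := by
        by_cases hc : y1 D2 = w1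
        · exact ⟨hc, by rw [hzdef D2, if_pos hc]⟩
        · exfalso
          have hzy : z D2 = y1 D2 := by rw [hzdef D2, if_neg hc]
          have hge := hw1ge D2
          rw [← hzE, hzy] at hw2b
          linarith
      have hy2E : b < y2 D2 := by rw [← hy1E.2, hzE]; exact hw2b
      have h2 := abs_sub_le_iff.mp (hy2M D2)
      have h1b := abs_sub_le_iff.mp (hy1b D2)
      -- max (b - P) (P - a) must equal P - a
      have hPE : b - P D2 < P D2 - a := by
        by_contra hcon
        push_neg at hcon
        have : max (b - P D2) (P D2 - a) = b - P D2 := max_eq_left hcon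
        rw [this] at h2
        linarith [h2.2]
      -- y1 D2 ≥ min b (2 P - b) ≥ a
      have hy1a : a ≤ y1 D2 := by
        have habs : |P D2 - b| = max (P D2 - b) (b - P D2) := by
          rw [abs_eq_max_neg]; ring_nf
        rcases max_cases (P D2 - b) (b - P D2) with ⟨hm, -⟩ | ⟨hm, -⟩ <;>
          rw [habs, hm] at h1b <;> linarith [h1b.2]
      have hw1a : a ≤ w1 := by rw [← hy1E.1]; exact hy1a
      exact le_min hw1a (by linarith)
    · -- b < w1 = y1 D1
      have hPD : b < P D1 := by
        by_contra hcon
        push_neg at hcon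
        have h1b := abs_sub_le_iff.mp (hy1b D1)
        have habs : |P D1 - b| = max (P D1 - b) (b - P D1) := by
          rw [abs_eq_max_neg]; ring_nf
        rcases max_cases (P D1 - b) (b - P D1) with ⟨hm, -⟩ | ⟨hm, -⟩ <;>
          rw [habs, hm] at h1b <;> rw [← hD1] at hw1b <;> linarith [h1b.2]
      have h2 := abs_sub_le_iff.mp (hy2M D1)
      have hmx : max (b - P D1) (P D1 - a) = P D1 - a := max_eq_right (by linarith)
      rw [hmx] at h2
      have hy2a : a ≤ y2 D1 := by linarith [h2.1]
      have hzD1 : z D1 = y2 D1 := by rw [hzdef D1, if_pos hD1]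
      have hw2a : a ≤ w2 := le_trans hy2a (by rw [← hzD1]; exact hw2ge D1)
      exact le_min (by linarith) hw2a
  -- final per-group bound
  rw [hmech]
  set C := max (1 + 2 * (1 - α) / α) (1 + 2 / (1 - α)) with hC
  have hC2 : 1 + 2 / (1 - α) ≤ C := le_max_right _ _
  have hC1 : 1 + 2 * (1 - α) / α ≤ C := le_max_left _ _
  rw [hMoA2]
  apply ciSup_le
  intro e
  clear hmech hMoA2 hy1spec hy2spec hMo hy1M hy1b hy2M hky1 hkz hw1mem hw2mem
  clear hw1max hw2max hD1 hD2 hw1ge hw2ge hzdef hy1def hy2def herase0 hbA hA0 hA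
  clear hz hy1 hy2 hP hSdef hF hw1 hw2 ha hb ho1 ho2 ho2A
  have hne : (0:ℝ) < ((F e).card : ℝ) := by exact_mod_cast hFpos e
  rw [← hsumW e (w1, w2)]
  have hgid : ∀ v : ℝ, fcost v (w1, w2) = max (u - v) (v - l) := by
    intro v
    rw [fcost_eq v (w1, w2)]
  have hSumE := hSumO e
  have hsc : ((Multiset.card (S e)) : ℝ) = ((F e).card : ℝ) := by exact_mod_cast hcardS e
  rcases le_or_gt u b with hub | hub
  · -- facilities within [?, b]; only agents right of the quantile pay extra
    set Q := max (a + b - 2 * P e) 0 with hQ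
    have hQnn : 0 ≤ Q := le_max_right _ _
    have hMe := hM1 e
    have hg1 : ∀ v ∈ (S e).filter (· ≤ P e), fcost v (w1, w2) ≤ fcost v o := by
      intro v hv
      have hvP : v ≤ P e := (Multiset.mem_filter.mp hv).2
      rw [hgid v, hfo v]
      apply max_le
      · exact le_trans (by rw [hu] at hub ⊢; linarith) (le_max_left _ _)
      · rcases max_cases (b - P e) (P e - a) with ⟨hm, -⟩ | ⟨hm, -⟩ <;> rw [hm] at hMe
        · exact le_trans (by linarith) (le_max_left _ _)
        · exact le_trans (by linarith) (le_max_right _ _)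
    have hg2 : ∀ v : ℝ, fcost v (w1, w2) ≤ fcost v o + Q := by
      intro v
      rw [hgid v, hfo v]
      apply max_le
      · have : u - v ≤ b - v := by linarith
        exact le_trans (le_trans this (le_max_left _ _)) (by linarith)
      · rcases max_cases (b - P e) (P e - a) with ⟨hm, -⟩ | ⟨hm, -⟩ <;> rw [hm] at hMe
        · have h1 : v - l ≤ (v - a) + (a + b - 2 * P e) := by linarith
          have h2 : a + b - 2 * P e ≤ Q := le_max_left _ _
          have h3 : v - a ≤ max (b - v) (v - a) := le_max_right _ _
          linarith
        · have h1 : v - l ≤ v - a := by linarith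
          have h3 : v - a ≤ max (b - v) (v - a) := le_max_right _ _
          linarith
    -- split the sum
    have hsplit := Multiset.filter_add_not (fun v => v ≤ P e) (S e)
    have hkey : (((S e).map (fun v => fcost v (w1, w2))).sum)
        ≤ ((S e).map (fun v => fcost v o)).sum
          + ((Multiset.card ((S e).filter (fun v => ¬ v ≤ P e)) : ℕ) : ℝ) * Q := by
      have esplit : ∀ gg : ℝ → ℝ, ((S e).map gg).sum
          = (((S e).filter (fun v => v ≤ P e)).map gg).sum
            + (((S e).filter (fun v => ¬ v ≤ P e)).map gg).sum := by
        intro gg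
        conv_lhs => rw [← hsplit]
        rw [Multiset.map_add, Multiset.sum_add]
      rw [esplit (fun v => fcost v (w1, w2)), esplit (fun v => fcost v o)]
      have hpart1 : (((S e).filter (fun v => v ≤ P e)).map (fun v => fcost v (w1, w2))).sum
          ≤ (((S e).filter (fun v => v ≤ P e)).map (fun v => fcost v o)).sum :=
        Multiset.sum_map_le_sum_map _ _ hg1
      have hpart2 : (((S e).filter (fun v => ¬ v ≤ P e)).map (fun v => fcost v (w1, w2))).sum
          ≤ (((S e).filter (fun v => ¬ v ≤ P e)).map (fun v => fcost v o)).sum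
            + ((Multiset.card ((S e).filter (fun v => ¬ v ≤ P e)) : ℕ) : ℝ) * Q := by
        have := Multiset.sum_map_le_sum_map (s := (S e).filter (fun v => ¬ v ≤ P e))
          (fun v => fcost v (w1, w2)) (fun v => fcost v o + Q) (fun v _ => hg2 v)
        rw [Multiset.sum_map_add] at this
        simpa [Multiset.map_const', Multiset.sum_replicate, nsmul_eq_mul] using this
      linarith
    -- count of right part
    obtain ⟨-, hc1, -⟩ := qSel_spec (S e) α (hS0 e) hα0 hα1.le
    have hPd := hPdef e
    rw [← hPd] at hc1
    have hcards : Multiset.card (S e) = Multiset.card ((S e).filter (fun v => v ≤ P e))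
        + Multiset.card ((S e).filter (fun v => ¬ v ≤ P e)) := by
      conv_lhs => rw [← hsplit]
      exact Multiset.card_add _ _
    have hcd := hcdge e
    have hcard1 : ((⌈α * ((Multiset.card (S e)) : ℝ)⌉.toNat : ℕ) : ℝ)
        ≤ ((Multiset.card ((S e).filter (fun v => v ≤ P e)) : ℕ) : ℝ) := by exact_mod_cast hc1
    have hcardsR : ((Multiset.card (S e)) : ℝ)
        = ((Multiset.card ((S e).filter (fun v => v ≤ P e)) : ℕ) : ℝ)
          + ((Multiset.card ((S e).filter (fun v => ¬ v ≤ P e)) : ℕ) : ℝ) := by exact_mod_cast hcards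
    have hcR : ((Multiset.card ((S e).filter (fun v => ¬ v ≤ P e)) : ℕ) : ℝ)
        ≤ (1 - α) * ((F e).card : ℝ) := by
      rw [← hsc]
      linarith
    -- numeric finish
    have hQb : (1 - α) * Q ≤ 2 * (1 - α) / α * O := by
      have hLe := hLB1 e
      rcases max_cases (a + b - 2 * P e) 0 with ⟨hm, hge⟩ | ⟨hm, -⟩ <;> rw [hQ, hm]
      · rw [div_mul_eq_mul_div, le_div_iff₀ hα0]
        have hstep : a + b - 2 * P e ≤ 2 * (b - P e) := by linarith
        nlinarith [mul_le_mul_of_nonneg_left hLe (by positivity : (0:ℝ) ≤ 2 * (1 - α)),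
          mul_le_mul_of_nonneg_left hstep (by positivity : (0:ℝ) ≤ (1 - α) * α)]
      · have hpos : (0:ℝ) ≤ 2 * (1 - α) / α * O := by positivity
        linarith
    have hfinal : (((S e).map (fun v => fcost v (w1, w2))).sum) ≤ ((F e).card : ℝ) * (C * O) := by
      have h5 : ((Multiset.card ((S e).filter (fun v => ¬ v ≤ P e)) : ℕ) : ℝ) * Q
          ≤ ((F e).card : ℝ) * ((1 - α) * Q) := by
        rw [mul_comm ((F e).card : ℝ) _]
        exact mul_le_mul_of_nonneg_right hcR hQnn |>.trans_eq (by ring)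
      have h6 : (1 - α) * Q ≤ (C - 1) * O := by
        have h7 : 2 * (1 - α) / α * O ≤ (C - 1) * O :=
          mul_le_mul_of_nonneg_right (by linarith) hOnn
        linarith
      nlinarith [mul_le_mul_of_nonneg_left h6 hne.le]
    calc (1 / ((F e).card : ℝ)) * (((S e).map (fun v => fcost v (w1, w2))).sum)
        ≤ (1 / ((F e).card : ℝ)) * (((F e).card : ℝ) * (C * O)) := by
          apply mul_le_mul_of_nonneg_left hfinal (by positivity)
      _ = C * O := by field_simp
  · -- facilities extend past b : uniform penalty u - b
    have hla := hM3 hub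
    have hg : ∀ v : ℝ, fcost v (w1, w2) ≤ fcost v o + (u - b) := by
      intro v
      rw [hgid v, hfo v]
      apply max_le
      · have h3 : b - v ≤ max (b - v) (v - a) := le_max_left _ _
        linarith
      · have h3 : v - a ≤ max (b - v) (v - a) := le_max_right _ _
        linarith
    have hkey : (((S e).map (fun v => fcost v (w1, w2))).sum)
        ≤ ((S e).map (fun v => fcost v o)).sum + ((Multiset.card (S e) : ℕ) : ℝ) * (u - b) := by
      have := Multiset.sum_map_le_sum_map (s := S e)
        (fun v => fcost v (w1, w2)) (fun v => fcost v o + (u - b)) (fun v _ => hg v)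
      rw [Multiset.sum_map_add] at this
      simpa [Multiset.map_const', Multiset.sum_replicate, nsmul_eq_mul] using this
    have hfinal : (((S e).map (fun v => fcost v (w1, w2))).sum) ≤ ((F e).card : ℝ) * (C * O) := by
      have h6 : u - b ≤ (C - 1) * O := by
        have h7 : 2 / (1 - α) * O ≤ (C - 1) * O :=
          mul_le_mul_of_nonneg_right (by linarith) hOnn
        linarith
      rw [hsc] at hkey
      nlinarith [mul_le_mul_of_nonneg_left h6 hne.le]
    calc (1 / ((F e).card : ℝ)) * (((S e).map (fun v => fcost v (w1, w2))).sum)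
        ≤ (1 / ((F e).card : ℝ)) * (((F e).card : ℝ) * (C * O)) := by
          apply mul_le_mul_of_nonneg_left hfinal (by positivity)
      _ = C * O := by field_simp

end
end

section
/- For all α, β ∈ [0,1], the facility location profile (w_1, w_2) output by the (α,β)-Quantile mechanism always coincides with the pair of representatives of some single group: there exists a group d such that w_1 = y_{d(1)} and w_2 = y_{d(2)}, i.e., w_1 and w_2 are respectively the closest candidate location to x_{α_d} and the closest candidate location to x_{α_d} in A with one copy of w_1 removed. -/
noncomputable section

/-!
Let `w₁` be the `m`-th order statistic of the groups' first representatives. The second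
facility `w₂` is the `m`-th order statistic of the same family after every group whose first
representative is `w₁` has swapped it for its second one. If `w₂` is one of the swapped-in values
we are done. Otherwise `w₂ ≠ w₁` is an unswapped value, and since the swap moved the `m`-th order
statistic from `w₁` to `w₂`, some swapped group `e` has its second representative on the far side
of `w₂` as seen from `w₁`. So the candidate `w₂` lies between the closest and the second-closest
candidate to the quantile agent of `e`, which forces it to be the second-closest one.
-/

theorem Multiset.countP_map_le_countP_map {ι α : Type*} (s : Multiset ι) {f g : ι → α}
    {p q : α → Prop} [DecidablePred p] [DecidablePred q] (h : ∀ i ∈ s, p (g i) → q (f i)) :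
    (s.map g).countP p ≤ (s.map f).countP q := by
  induction s using Quotient.inductionOn with
  | h l =>
    simpa [List.countP_map] using
      List.countP_mono_left fun i hi hpi => by simpa using h i hi (by simpa using hpi)

/-- `a` is an `m`-th smallest element of `S`, counting from `0`. -/
def IsOrderStatistic {α : Type*} [LinearOrder α] (S : Multiset α) (m : ℕ) (a : α) : Prop :=
  S.countP (· < a) ≤ m ∧ m < S.countP (· ≤ a)

section OrderStatistic

variable {α : Type*} [LinearOrder α]

theorem isOrderStatistic_append_cons {L R : List α} {t : α} (hL : ∀ a ∈ L, a ≤ t)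
    (hR : ∀ b ∈ R, t ≤ b) :
    IsOrderStatistic ((L ++ t :: R : List α) : Multiset α) L.length t := by
  simp only [IsOrderStatistic, Multiset.coe_countP, List.countP_append, List.countP_cons]
  constructor
  · have hRlt : R.countP (fun b => decide (b < t)) = 0 :=
      List.countP_eq_zero.2 fun b hb => by simpa using hR b hb
    have hLlt : L.countP (fun a => decide (a < t)) ≤ L.length := List.countP_le_length
    simp [hRlt, hLlt]
  · have hLle : L.countP (fun a => decide (a ≤ t)) = L.length :=
      List.countP_eq_length.2 fun a ha => by simpa using hL a ha
    simp [hLle]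

theorem List.Pairwise.isOrderStatistic_getElem {l : List α} (hl : l.Pairwise (· ≤ ·)) {i : ℕ}
    (hi : i < l.length) : IsOrderStatistic (l : Multiset α) i l[i] := by
  have hsplit : l = l.take i ++ l[i] :: l.drop (i + 1) := by
    rw [← List.drop_eq_getElem_cons hi, List.take_append_drop]
  have hlen : (l.take i).length = i := List.length_take_of_le hi.le
  rw [hsplit, List.pairwise_append, List.pairwise_cons] at hl
  obtain ⟨-, ⟨hR, -⟩, hcross⟩ := hl
  have := isOrderStatistic_append_cons (fun a ha => hcross a ha _ List.mem_cons_self) hR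
  rwa [hlen, ← hsplit] at this

theorem exists_eq_and_mem_uIcc_of_isOrderStatistic {ι : Type*} (s : Multiset ι) {f g : ι → α}
    {m : ℕ} {a b : α} (hgf : ∀ i ∈ s, f i ≠ a → g i = f i)
    (ha : IsOrderStatistic (s.map f) m a) (hb : IsOrderStatistic (s.map g) m b) (hba : b ≠ a) :
    ∃ i ∈ s, f i = a ∧ b ∈ Set.uIcc (g i) a := by
  obtain ⟨ha_lt, ha_le⟩ := ha
  obtain ⟨hb_lt, hb_le⟩ := hb
  rcases hba.lt_or_gt with hlt | hgt
  · obtain ⟨i, hi, hfi, hgi⟩ : ∃ i ∈ s, f i = a ∧ g i ≤ b := by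
      by_contra! h
      have hcount := Multiset.countP_map_le_countP_map s (p := (· ≤ b)) (q := (· < a))
        fun i hi hgi => by
          by_cases hfi : f i = a
          · exact absurd hgi (h i hi hfi).not_ge
          · exact hgf i hi hfi ▸ hgi.trans_lt hlt
      exact (hb_le.trans_le (hcount.trans ha_lt)).false
    exact ⟨i, hi, hfi, Set.mem_uIcc.2 (Or.inl ⟨hgi, hlt.le⟩)⟩
  · obtain ⟨i, hi, hfi, hgi⟩ : ∃ i ∈ s, f i = a ∧ b ≤ g i := by
      by_contra! h
      have hcount := Multiset.countP_map_le_countP_map s (p := fun x => ¬x < b)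
        (q := fun x => ¬x ≤ a) fun i hi hgi => by
          by_cases hfi : f i = a
          · exact absurd (h i hi hfi) hgi
          · rw [hgf i hi hfi] at hgi
            exact fun hle => hgi (hle.trans_lt hgt)
      have hg := Multiset.card_eq_countP_add_countP (· < b) (s.map g)
      have hf := Multiset.card_eq_countP_add_countP (· ≤ a) (s.map f)
      simp only [Multiset.card_map] at hg hf
      omega
    exact ⟨i, hi, hfi, Set.mem_uIcc.2 (Or.inr ⟨hgt.le, hgi⟩)⟩

end OrderStatistic

theorem qSel_index_lt_length_sort {S : Multiset ℝ} (hS : S ≠ 0) {γ : ℝ} (hγ : γ ≤ 1) :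
    ⌈γ * (Multiset.card S : ℝ)⌉.toNat - 1 < (S.sort (· ≤ ·)).length := by
  have hcard : 0 < Multiset.card S := Multiset.card_pos.2 hS
  have : ⌈γ * (Multiset.card S : ℝ)⌉ ≤ Multiset.card S :=
    Int.ceil_le.2 (by push_cast; exact mul_le_of_le_one_left (by positivity) hγ)
  rw [Multiset.length_sort]
  omega

theorem isOrderStatistic_qSel {S : Multiset ℝ} (hS : S ≠ 0) {γ : ℝ} (hγ : γ ≤ 1) :
    IsOrderStatistic S (⌈γ * (Multiset.card S : ℝ)⌉.toNat - 1) (qSel S γ) := by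
  have hi := qSel_index_lt_length_sort hS hγ
  have := (Multiset.pairwise_sort S (· ≤ ·)).isOrderStatistic_getElem hi
  rwa [Multiset.sort_eq, ← List.getD_eq_getElem _ 0] at this

theorem qSel_mem {S : Multiset ℝ} (hS : S ≠ 0) {γ : ℝ} (hγ : γ ≤ 1) : qSel S γ ∈ S := by
  have hi := qSel_index_lt_length_sort hS hγ
  rw [qSel, List.getD_eq_getElem _ _ hi]
  exact (Multiset.mem_sort _).1 (List.getElem_mem hi)

theorem eq_of_mem_uIcc_of_abs_sub_le {q y v w : ℝ} (hvw : v ≠ w) (hv : v ∈ Set.uIcc y w)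
    (hw : |q - w| ≤ |q - v|) (hy : |q - y| ≤ |q - v|) : y = v := by
  by_contra hyv
  rcases Set.mem_uIcc.1 hv with ⟨h₁, h₂⟩ | ⟨h₁, h₂⟩
  · have := lt_of_le_of_ne h₁ hyv
    have := lt_of_le_of_ne h₂ hvw
    cases abs_cases (q - w) <;> cases abs_cases (q - v) <;> cases abs_cases (q - y) <;> linarith
  · have := lt_of_le_of_ne h₁ hvw.symm
    have := lt_of_le_of_ne h₂ (Ne.symm hyv)
    cases abs_cases (q - w) <;> cases abs_cases (q - v) <;> cases abs_cases (q - y) <;> linarith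

theorem closest_mem_and_abs_sub_closest_le {A : Multiset ℝ} (hA : A.toFinset.Nonempty)
    (p : ℝ) :
    closest A p ∈ A ∧ ∀ b ∈ A, |p - closest A p| ≤ |p - b| := by
  rw [closest, dif_pos hA]
  generalize_proofs hne
  simpa only [Finset.mem_filter, Multiset.mem_toFinset] using Finset.min'_mem _ hne

theorem closest_erase_closest_eq_of_mem_uIcc {A : Multiset ℝ} {p v : ℝ} (hv : v ∈ A)
    (hvw : v ≠ closest A p)
    (hbetween : v ∈ Set.uIcc (closest (A.erase (closest A p)) p) (closest A p)) :
    closest (A.erase (closest A p)) p = v := by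
  have hv' : v ∈ A.erase (closest A p) := (Multiset.mem_erase_of_ne hvw).2 hv
  exact eq_of_mem_uIcc_of_abs_sub_le hvw hbetween
    ((closest_mem_and_abs_sub_closest_le ⟨v, Multiset.mem_toFinset.2 hv⟩ p).2 v hv)
    ((closest_mem_and_abs_sub_closest_le ⟨v, Multiset.mem_toFinset.2 hv'⟩ p).2 v hv')

theorem exists_closest_eq_and_closest_erase_eq_qSel {ι : Type*} [Fintype ι] [Nonempty ι]
    {A : Multiset ℝ} (hA : A ≠ 0) {β : ℝ} (hβ : β ≤ 1) (q : ι → ℝ) {w : ℝ}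
    (hw : w = qSel (Finset.univ.val.map fun d => closest A (q d)) β) :
    ∃ e, closest A (q e) = w ∧
      qSel (Finset.univ.val.map fun d =>
        if closest A (q d) = w then closest (A.erase (closest A (q d))) (q d) else closest A (q d))
        β = closest (A.erase w) (q e) := by
  set y : ι → ℝ := fun d => closest A (q d)
  set z : ι → ℝ := fun d => if y d = w then closest (A.erase (y d)) (q d) else y d
  have hne : ∀ f : ι → ℝ, Finset.univ.val.map f ≠ 0 := by simp [Finset.univ_nonempty.ne_empty]
  have hcard : ∀ f : ι → ℝ, Multiset.card (Finset.univ.val.map f) = Fintype.card ι := by simp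
  have hy := isOrderStatistic_qSel (hne y) hβ
  have hz := isOrderStatistic_qSel (hne z) hβ
  rw [hcard] at hy hz
  obtain ⟨d, -, hd⟩ := Multiset.mem_map.1 (qSel_mem (hne z) hβ)
  by_cases hdw : y d = w
  · refine ⟨d, hdw, ?_⟩
    rw [← hd, ← hdw]
    exact if_pos hdw
  · have hzd : z d = y d := if_neg hdw
    obtain ⟨e, -, rfl, hbetween⟩ := exists_eq_and_mem_uIcc_of_isOrderStatistic Finset.univ.val
      (fun i _ hi => if_neg hi) (hw ▸ hy) hz (by rwa [← hd, hzd])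
    refine ⟨e, rfl, ?_⟩
    rw [if_pos rfl, ← hd, hzd] at hbetween
    rw [← hd, hzd]
    have hyd : y d ∈ A := (closest_mem_and_abs_sub_closest_le (Multiset.toFinset_nonempty.2 hA) _).1
    exact (closest_erase_closest_eq_of_mem_uIcc hyd hdw hbetween).symm

theorem quantileMech_output_is_group_representatives_general
    (α β : ℝ) (hβ : β ∈ Set.Icc (0 : ℝ) 1)
    (A : Multiset ℝ) (hA : 2 ≤ Multiset.card A)
    (n k : ℕ) (hk : 0 < k)
    (group : Fin n → Fin k)
    (x : Fin n → ℝ) :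
    ∃ d : Fin k,
      (quantileMech A α β group x).1 = closest A (qSel (groupLocs group x d) α) ∧
      (quantileMech A α β group x).2 =
        closest (A.erase ((quantileMech A α β group x).1)) (qSel (groupLocs group x d) α) := by
  have hA0 : A ≠ 0 := by rintro rfl; simp at hA
  have : Nonempty (Fin k) := Fin.pos_iff_nonempty.1 hk
  obtain ⟨d, h₁, h₂⟩ := exists_closest_eq_and_closest_erase_eq_qSel hA0 hβ.2
    (fun d => qSel (groupLocs group x d) α) rfl
  exact ⟨d, h₁.symm, h₂⟩

/-- The output of the (α,β)-Quantile mechanism always coincides with the pair of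
representatives of some single group: the two facilities are respectively the closest
candidate location to the group's quantile agent, and the closest candidate location
to that agent in `A` with one copy of the first facility removed. -/
theorem quantileMech_output_is_group_representatives
    (α β : ℝ) (hα : α ∈ Set.Icc (0 : ℝ) 1) (hβ : β ∈ Set.Icc (0 : ℝ) 1)
    (A : Multiset ℝ) (hA : 2 ≤ Multiset.card A)
    (n k : ℕ) (hn : 0 < n) (hk : 0 < k)
    (group : Fin n → Fin k) (hgrp : ∀ d : Fin k, ∃ i : Fin n, group i = d)
    (x : Fin n → ℝ) :
    ∃ d : Fin k,
      (quantileMech A α β group x).1 = closest A (qSel (groupLocs group x d) α) ∧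
      (quantileMech A α β group x).2 =
        closest (A.erase ((quantileMech A α β group x).1)) (qSel (groupLocs group x d) α) :=
  quantileMech_output_is_group_representatives_general α β hβ A hA n k hk group x

end
end

section
/- Let r ∈ ℝ, let w_1 = t(r) be a closest element of the multiset A to r, and let w_2 = s(r) be a closest element to r of the multiset A with one copy of w_1 removed. Then for every x ∈ ℝ and every facility location profile (o_1, o_2), max(|x − w_1|, |x − w_2|) ≤ max(|x − o_1|, |x − o_2|) + 2 · max(|r − o_1|, |r − o_2|). -/
noncomputable section

/-- If `w₁, w₂` are the two closest candidate slots to a point `r`, then for every point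
`x` and every facility location profile `(o₁, o₂)`, the max-variant cost of `x` under
`(w₁, w₂)` is at most its cost under `(o₁, o₂)` plus twice the cost of `r` under `(o₁, o₂)`. -/
theorem closest_pair_cost_bound
    (A : Multiset ℝ) (hA : 2 ≤ Multiset.card A)
    (r w₁ w₂ : ℝ)
    (hw₁ : w₁ ∈ A) (hw₁min : ∀ a ∈ A, |r - w₁| ≤ |r - a|)
    (hw₂ : w₂ ∈ A.erase w₁) (hw₂min : ∀ a ∈ A.erase w₁, |r - w₂| ≤ |r - a|)
    (x : ℝ) (o : ℝ × ℝ) (ho : IsProfile A o) :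
    max |x - w₁| |x - w₂| ≤ max |x - o.1| |x - o.2| + 2 * max |r - o.1| |r - o.2| := by
  obtain ⟨ho1, ho2⟩ := ho
  have tri : ∀ a b : ℝ, |x - b| ≤ |x - a| + |r - a| + |r - b| := by
    intro a b
    calc |x - b| ≤ |x - a| + |a - b| := abs_sub_le _ _ _
      _ ≤ |x - a| + (|a - r| + |r - b|) := by gcongr; exact abs_sub_le _ _ _
      _ = |x - a| + |r - a| + |r - b| := by rw [abs_sub_comm a r]; ring
  have hN1 : |r - o.1| ≤ max |r - o.1| |r - o.2| := le_max_left _ _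
  have hN2 : |r - o.2| ≤ max |r - o.1| |r - o.2| := le_max_right _ _
  have hM1 : |x - o.1| ≤ max |x - o.1| |x - o.2| := le_max_left _ _
  have hM2 : |x - o.2| ≤ max |x - o.1| |x - o.2| := le_max_right _ _
  have hw1o1 : |r - w₁| ≤ |r - o.1| := hw₁min _ ho1
  refine max_le ?_ ?_
  · have := tri o.1 w₁
    linarith
  · by_cases h : o.1 = w₁
    · have h2 : |r - w₂| ≤ |r - o.2| := hw₂min _ (h ▸ ho2)
      have := tri o.2 w₂
      linarith
    · have h1 : |r - w₂| ≤ |r - o.1| :=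
        hw₂min _ (Multiset.mem_erase_of_ne h |>.mpr ho1)
      have := tri o.1 w₂
      linarith

end
end

section
/- Let α ∈ (0,1]. Consider a single group of n agents with locations x_1 ≤ x_2 ≤ … ≤ x_n in ℝ, let p = x_{⌈αn⌉}, let w_1 = t(p) and w_2 = s(p), and suppose w_1 ≤ w_2. Let (o_1, o_2) be a facility location profile with o_1 ≤ o_2 < w_1. Then (1/n) · Σ_{i=1}^{n} max(|x_i − o_1|, |x_i − o_2|) ≥ ((1 − α)/2) · (w_2 − o_1). -/
noncomputable section

/-- If the two closest slots `w₁ ≤ w₂` to the ⌈αn⌉-th leftmost agent lie strictly to the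
right of a facility location profile `o₁ ≤ o₂`, then the average max-variant cost of the
group under `(o₁, o₂)` is at least `((1-α)/2)·(w₂ - o₁)`. -/
theorem avg_cost_lower_bound_left_profile
    (α : ℝ) (hα : α ∈ Set.Ioc (0 : ℝ) 1)
    (A : Multiset ℝ) (hA : 2 ≤ Multiset.card A)
    (n : ℕ) (hn : 0 < n) (x : Fin n → ℝ) (hmono : Monotone x)
    (hidx : ⌈α * (n : ℝ)⌉.toNat - 1 < n)
    (w₁ w₂ : ℝ)
    (hw₁ : w₁ ∈ A)
    (hw₁min : ∀ a ∈ A,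
      |x ⟨⌈α * (n : ℝ)⌉.toNat - 1, hidx⟩ - w₁| ≤ |x ⟨⌈α * (n : ℝ)⌉.toNat - 1, hidx⟩ - a|)
    (hw₂ : w₂ ∈ A.erase w₁)
    (hw₂min : ∀ a ∈ A.erase w₁,
      |x ⟨⌈α * (n : ℝ)⌉.toNat - 1, hidx⟩ - w₂| ≤ |x ⟨⌈α * (n : ℝ)⌉.toNat - 1, hidx⟩ - a|)
    (hw : w₁ ≤ w₂)
    (o₁ o₂ : ℝ) (ho : IsProfile A (o₁, o₂)) (hoo : o₁ ≤ o₂) (how : o₂ < w₁) :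
    (1 - α) / 2 * (w₂ - o₁) ≤ (1 / (n : ℝ)) * ∑ i : Fin n, max |x i - o₁| |x i - o₂| := by
  obtain ⟨hα0, hα1⟩ := hα
  set k : ℕ := ⌈α * (n : ℝ)⌉.toNat - 1 with hk
  set p : ℝ := x ⟨k, hidx⟩ with hp
  have hnpos : (0:ℝ) < n := Nat.cast_pos.mpr hn
  have hceil1 : 1 ≤ ⌈α * (n : ℝ)⌉ := Int.ceil_pos.mpr (by positivity)
  have htoNat1 : 1 ≤ ⌈α * (n : ℝ)⌉.toNat := by omega
  have hkR : (k : ℝ) ≤ α * n := by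
    have h1 : (⌈α * (n:ℝ)⌉ : ℝ) < α * n + 1 := Int.ceil_lt_add_one _
    have h3 : (k : ℝ) = (⌈α * (n:ℝ)⌉.toNat : ℝ) - 1 := by
      rw [hk]; push_cast [Nat.cast_sub htoNat1]; ring
    have h4 : ((⌈α * (n:ℝ)⌉.toNat : ℤ) : ℝ) = ((⌈α * (n:ℝ)⌉ : ℤ) : ℝ) := by
      rw [Int.toNat_of_nonneg (by omega)]
    push_cast at h4
    linarith
  have ho₁A : o₁ ∈ A := ho.1
  have h1 : |p - w₁| ≤ |p - o₁| := hw₁min o₁ ho₁A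
  have ho₁ne : o₁ ≠ w₁ := by intro h; linarith [h ▸ hoo]
  have h2 : |p - w₂| ≤ |p - o₁| := hw₂min o₁ ((Multiset.mem_erase_of_ne ho₁ne).mpr ho₁A)
  have hpo : o₁ ≤ p := by
    by_contra h
    push_neg at h
    have ha : w₁ - p ≤ |p - w₁| := by rw [abs_sub_comm]; exact le_abs_self _
    have hb : |p - o₁| = o₁ - p := by rw [abs_sub_comm]; exact abs_of_pos (by linarith)
    linarith
  have hd : |p - o₁| = p - o₁ := abs_of_nonneg (by linarith)
  have hc : w₂ - p ≤ |p - w₂| := by rw [abs_sub_comm]; exact le_abs_self _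
  have key : (w₂ - o₁)/2 ≤ p - o₁ := by linarith
  have hw2o : (0:ℝ) ≤ w₂ - o₁ := by linarith
  set S : Finset (Fin n) := Finset.Ici ⟨k, hidx⟩ with hS
  have hcard : S.card = n - k := by rw [hS, Fin.card_Ici]
  have hsum1 : (S.card : ℝ) * ((w₂ - o₁)/2) ≤ ∑ i ∈ S, max |x i - o₁| |x i - o₂| := by
    have := Finset.card_nsmul_le_sum S (fun i => max |x i - o₁| |x i - o₂|) ((w₂ - o₁)/2)
      (fun i hi => by
        have hle : (⟨k, hidx⟩ : Fin n) ≤ i := Finset.mem_Ici.mp hi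
        have hx : p ≤ x i := hmono hle
        have : x i - o₁ ≤ |x i - o₁| := le_abs_self _
        have : |x i - o₁| ≤ max |x i - o₁| |x i - o₂| := le_max_left _ _
        linarith)
    simpa [nsmul_eq_mul] using this
  have hsum2 : ∑ i ∈ S, max |x i - o₁| |x i - o₂| ≤ ∑ i : Fin n, max |x i - o₁| |x i - o₂| :=
    Finset.sum_le_sum_of_subset_of_nonneg (Finset.subset_univ S)
      (fun i _ _ => le_max_of_le_left (abs_nonneg _))
  have hkn : k ≤ n := le_of_lt hidx
  have hcardR : ((n - k : ℕ) : ℝ) = (n : ℝ) - k := by push_cast [Nat.cast_sub hkn]; ring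
  have hnk : (1 - α) * n ≤ ((n : ℝ) - k) := by linarith
  rw [one_div, inv_mul_eq_div, le_div_iff₀ hnpos]
  have hfin : (1 - α) / 2 * (w₂ - o₁) * n ≤ ((n:ℝ) - k) * ((w₂ - o₁)/2) := by nlinarith
  rw [hcard, hcardR] at hsum1
  linarith


end
end

section
/- Let α ∈ (0,1]. Consider a single group of n agents with locations x_1 ≤ x_2 ≤ … ≤ x_n in ℝ, let p = x_{⌈αn⌉}, and let y = t(p) be a closest element of the multiset A to p. Suppose w_1, w_2 ∈ ℝ satisfy y ≤ w_1 ≤ w_2 with w_2 ∈ A, and let (o_1, o_2) be a facility location profile with w_2 < o_1 ≤ o_2. Then (1/n) · Σ_{i=1}^{n} max(|x_i − o_1|, |x_i − o_2|) ≥ (α/2) · (o_2 − w_1). -/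
noncomputable section

/-- If `y` is a closest slot to the ⌈αn⌉-th leftmost agent, `y ≤ w₁ ≤ w₂` with `w₂ ∈ A`,
and `(o₁, o₂)` is a facility location profile with `w₂ < o₁ ≤ o₂`, then the average
max-variant cost of the group under `(o₁, o₂)` is at least `(α/2)·(o₂ - w₁)`. -/
theorem avg_cost_lower_bound_right_profile
    (α : ℝ) (hα : α ∈ Set.Ioc (0 : ℝ) 1)
    (A : Multiset ℝ) (hA : 2 ≤ Multiset.card A)
    (n : ℕ) (hn : 0 < n) (x : Fin n → ℝ) (hmono : Monotone x)
    (hidx : ⌈α * (n : ℝ)⌉.toNat - 1 < n)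
    (y : ℝ) (hy : y ∈ A)
    (hymin : ∀ a ∈ A,
      |x ⟨⌈α * (n : ℝ)⌉.toNat - 1, hidx⟩ - y| ≤ |x ⟨⌈α * (n : ℝ)⌉.toNat - 1, hidx⟩ - a|)
    (w₁ w₂ : ℝ) (hyw : y ≤ w₁) (hw : w₁ ≤ w₂) (hw₂A : w₂ ∈ A)
    (o₁ o₂ : ℝ) (ho : IsProfile A (o₁, o₂)) (hoo : o₁ ≤ o₂) (hwo : w₂ < o₁) :
    α / 2 * (o₂ - w₁) ≤ (1 / (n : ℝ)) * ∑ i : Fin n, max |x i - o₁| |x i - o₂| := by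
  obtain ⟨hα0, hα1⟩ := hα
  set k : ℕ := ⌈α * (n : ℝ)⌉.toNat - 1 with hk
  set pidx : Fin n := ⟨k, hidx⟩ with hpidx
  set p : ℝ := x pidx with hp
  have ho₂A : o₂ ∈ A := Multiset.mem_of_mem_erase ho.2
  have hw₁o₂ : w₁ ≤ o₂ := by linarith
  -- p ≤ (w₁ + o₂)/2
  have hpb : p ≤ (w₁ + o₂) / 2 := by
    by_contra hcon
    push_neg at hcon
    have hpw : w₁ < p := by linarith
    have hyp : y ≤ p := le_trans hyw hpw.le
    have h1 := hymin o₂ ho₂A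
    have habs : |p - y| = p - y := abs_of_nonneg (by linarith)
    rw [habs] at h1
    rcases le_or_gt p o₂ with h | h
    · rw [abs_of_nonpos (by linarith)] at h1
      linarith
    · rw [abs_of_pos (by linarith)] at h1
      linarith
  have hc0 : (0:ℝ) ≤ (o₂ - w₁) / 2 := by linarith
  -- pointwise bound on Iic pidx
  have hpoint : ∀ i ∈ Finset.Iic pidx, (o₂ - w₁) / 2 ≤ max |x i - o₁| |x i - o₂| := by
    intro i hi
    have hxi : x i ≤ p := hmono (Finset.mem_Iic.mp hi)
    have : (o₂ - w₁) / 2 ≤ |x i - o₂| := by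
      rw [abs_of_nonpos (by linarith)]; linarith
    exact le_trans this (le_max_right _ _)
  have hnonneg : ∀ i ∈ Finset.univ, (0:ℝ) ≤ max |x i - o₁| |x i - o₂| :=
    fun i _ => le_trans (abs_nonneg _) (le_max_left _ _)
  have hsum1 : ∑ i ∈ Finset.Iic pidx, max |x i - o₁| |x i - o₂|
      ≤ ∑ i : Fin n, max |x i - o₁| |x i - o₂| :=
    Finset.sum_le_sum_of_subset_of_nonneg (Finset.subset_univ _) (fun i _ _ => hnonneg i (Finset.mem_univ i))
  have hsum2 : (k + 1 : ℝ) * ((o₂ - w₁) / 2)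
      ≤ ∑ i ∈ Finset.Iic pidx, max |x i - o₁| |x i - o₂| := by
    have := Finset.sum_le_sum hpoint
    rw [Finset.sum_const, Fin.card_Iic] at this
    simpa [nsmul_eq_mul] using this
  -- k + 1 = ⌈αn⌉.toNat ≥ αn
  have hαn : (0:ℝ) < α * n := by positivity
  have hceil1 : 1 ≤ ⌈α * (n : ℝ)⌉ := Int.ceil_pos.mpr hαn
  have hk1 : (k : ℕ) + 1 = ⌈α * (n : ℝ)⌉.toNat := by
    have : 1 ≤ ⌈α * (n : ℝ)⌉.toNat := by omega
    omega
  have hge : α * n ≤ (k:ℝ) + 1 := by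
    have h1 : ((k:ℝ) + 1) = ((⌈α * (n:ℝ)⌉.toNat : ℕ) : ℝ) := by exact_mod_cast hk1
    have h2 : ((⌈α * (n:ℝ)⌉.toNat : ℕ) : ℝ) = ((⌈α * (n:ℝ)⌉ : ℤ) : ℝ) := by
      exact_mod_cast Int.toNat_of_nonneg (by omega)
    rw [h1, h2]
    exact Int.le_ceil _
  have hnpos : (0:ℝ) < n := by exact_mod_cast hn
  have key : α * n * ((o₂ - w₁) / 2) ≤ ∑ i : Fin n, max |x i - o₁| |x i - o₂| :=
    calc α * n * ((o₂ - w₁) / 2) ≤ ((k:ℝ) + 1) * ((o₂ - w₁) / 2) :=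
          mul_le_mul_of_nonneg_right hge hc0
      _ ≤ _ := le_trans hsum2 hsum1
  rw [mul_comm (1 / (n:ℝ))]
  calc α / 2 * (o₂ - w₁) = (α * n * ((o₂ - w₁) / 2)) * (1 / n) := by
        field_simp
    _ ≤ _ := mul_le_mul_of_nonneg_right key (by positivity)

end
end
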